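/- arXiv:1511.07306 — 7 statements merged into one kernel-verified Lean document; each statement's English description precedes it below -/
import Mathlib

section
/- Let T be a tree with at least 2 vertices and let F ⊆ V(T) be any subset. Then there is a set D ⊆ A(T) with F ∩ D = ∅ such that: every v ∈ D has degree exactly 2 in T; no v ∈ D is adjacent to any leaf of T; no two vertices of D have a common neighbor in T; and |D| ≥ (|V(T)| − 8|L(T)| − 2|F| + 12)/4. -/
set_option linter.unusedSectionVars false

open Finset SimpleGraph

section Aux
variable {V : Type*} [Fintype V] [DecidableEq V] {T : SimpleGraph V} [DecidableRel T.Adj]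

lemma aux_walk_parity (A : Finset V)
    (hA1 : ∀ u ∈ A, ∀ v ∈ A, ¬ T.Adj u v)
    (hA2 : ∀ u ∉ A, ∀ v ∉ A, ¬ T.Adj u v) :
    ∀ {u v : V} (p : T.Walk u v), (Even p.length ↔ (u ∈ A ↔ v ∈ A)) := by
  intro u v p
  induction p with
  | nil => simp
  | @cons a b c h p ih =>
    have hab : a ∈ A ↔ b ∉ A := by
      constructor
      · intro ha hb; exact hA1 a ha b hb h
      · intro hb; by_contra ha; exact hA2 a ha b hb h
    simp only [SimpleGraph.Walk.length_cons, Nat.even_add_one, ih]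
    tauto

lemma aux_dist_parity (hc : T.Connected) (A : Finset V)
    (hA1 : ∀ u ∈ A, ∀ v ∈ A, ¬ T.Adj u v)
    (hA2 : ∀ u ∉ A, ∀ v ∉ A, ¬ T.Adj u v) (r v : V) :
    Even (T.dist r v) ↔ (r ∈ A ↔ v ∈ A) := by
  obtain ⟨p, hp⟩ := hc.exists_walk_length_eq_dist r v
  rw [← hp]
  exact aux_walk_parity A hA1 hA2 p

lemma aux_adj_dist (hc : T.Connected) (A : Finset V)
    (hA1 : ∀ u ∈ A, ∀ v ∈ A, ¬ T.Adj u v)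
    (hA2 : ∀ u ∉ A, ∀ v ∉ A, ¬ T.Adj u v) (r : V) {u w : V} (h : T.Adj u w) :
    T.dist r w + 1 = T.dist r u ∨ T.dist r u + 1 = T.dist r w := by
  have h1 : T.dist u w = 1 := dist_eq_one_iff_adj.2 h
  have h2 : T.dist r w ≤ T.dist r u + 1 := by
    have := hc.dist_triangle (u := r) (v := u) (w := w); omega
  have h3 : T.dist r u ≤ T.dist r w + 1 := by
    have := hc.dist_triangle (u := r) (v := w) (w := u)
    have h4 : T.dist w u = 1 := dist_eq_one_iff_adj.2 h.symm
    omega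
  have hne : T.dist r u ≠ T.dist r w := by
    intro he
    have p1 := aux_dist_parity hc A hA1 hA2 r u
    have p2 := aux_dist_parity hc A hA1 hA2 r w
    have huw : u ∈ A ↔ w ∉ A := by
      constructor
      · intro ha hb; exact hA1 u ha w hb h
      · intro hb; by_contra ha; exact hA2 u ha w hb h
    rw [he, p2] at p1
    tauto
  omega

lemma aux_unique_parent (hT : T.IsTree) (r : V) {w x y : V}
    (hx : T.Adj x w) (hy : T.Adj y w)
    (hdx : T.dist r x + 1 = T.dist r w) (hdy : T.dist r y + 1 = T.dist r w) :
    x = y := by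
  have hc := hT.isConnected
  have build : ∀ z : V, T.Adj z w → T.dist r z + 1 = T.dist r w →
      ∃ q : T.Walk w r, q.IsPath ∧ q.getVert 1 = z := by
    intro z hz hdz
    obtain ⟨p, hp⟩ := hc.exists_walk_length_eq_dist r z
    have hblen : p.bypass.length = T.dist r z := by
      have h1 := SimpleGraph.Walk.length_bypass_le p
      have h2 := T.dist_le p.bypass
      omega
    have hwns : w ∉ p.bypass.support := by
      intro hmem
      have h1 := SimpleGraph.Walk.length_takeUntil_le p.bypass hmem
      have h2 := T.dist_le (p.bypass.takeUntil w hmem)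
      omega
    refine ⟨SimpleGraph.Walk.cons hz.symm p.bypass.reverse, ?_, ?_⟩
    · rw [SimpleGraph.Walk.cons_isPath_iff]
      refine ⟨p.bypass_isPath.reverse, ?_⟩
      rw [SimpleGraph.Walk.support_reverse, List.mem_reverse]
      exact hwns
    · rw [SimpleGraph.Walk.getVert_cons _ _ one_ne_zero]
      exact SimpleGraph.Walk.getVert_zero _
  obtain ⟨q1, hq1, hg1⟩ := build x hx hdx
  obtain ⟨q2, hq2, hg2⟩ := build y hy hdy
  have : (⟨q1, hq1⟩ : T.Path w r) = ⟨q2, hq2⟩ := hT.IsAcyclic.path_unique _ _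
  have hq : q1 = q2 := congrArg Subtype.val this
  rw [← hg1, ← hg2, hq]

lemma aux_exists_parent (hc : T.Connected) (r : V) {u : V} (hu : u ≠ r) :
    ∃ w, T.Adj u w ∧ T.dist r w + 1 = T.dist r u := by
  have hd0 : T.dist u r ≠ 0 := by
    simp [hc.dist_eq_zero_iff]; exact hu
  obtain ⟨p, hp⟩ := hc.exists_walk_length_eq_dist u r
  obtain ⟨w, h, q, rfl⟩ := SimpleGraph.Walk.exists_eq_cons_of_ne hu p
  refine ⟨w, h, ?_⟩
  have h1 : T.dist w r ≤ q.length := T.dist_le q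
  have h2 : T.dist u r ≤ T.dist w r + 1 := by
    have := hc.dist_triangle (u := u) (v := w) (w := r)
    have h3 : T.dist u w = 1 := dist_eq_one_iff_adj.2 h
    omega
  have hsym1 : T.dist r w = T.dist w r := dist_comm
  have hsym2 : T.dist r u = T.dist u r := dist_comm
  simp only [SimpleGraph.Walk.length_cons] at hp
  omega

end Aux

/-- **Lemma 1**: given a tree `T` (with at least 2 vertices), a bipartition part `A` with
`|A| ≥ |V(T)|/2`, and any set `F` of vertices, there is a set `D ⊆ A` avoiding `F`,
consisting of vertices of degree 2 not adjacent to any leaf, such that no two vertices of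
`D` have a common neighbor, with `|D| ≥ (|V(T)| - 8|L(T)| - 2|F| + 12)/4`. -/
theorem tree_degree_two_set {V : Type*} [Fintype V] [DecidableEq V]
    (T : SimpleGraph V) [DecidableRel T.Adj] (hT : T.IsTree) (hV : 2 ≤ Fintype.card V)
    (F : Finset V) (A : Finset V)
    (hA1 : ∀ u ∈ A, ∀ v ∈ A, ¬ T.Adj u v)
    (hA2 : ∀ u ∉ A, ∀ v ∉ A, ¬ T.Adj u v)
    (hA3 : Fintype.card V ≤ 2 * A.card) :
    ∃ D : Finset V, D ⊆ A ∧ Disjoint D F ∧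
      (∀ v ∈ D, T.degree v = 2) ∧
      (∀ v ∈ D, ∀ u : V, T.degree u = 1 → ¬ T.Adj v u) ∧
      (∀ u ∈ D, ∀ v ∈ D, u ≠ v → ∀ w : V, ¬ (T.Adj u w ∧ T.Adj v w)) ∧
      (Fintype.card V : ℤ) - 8 * (univ.filter (fun v => T.degree v = 1)).card
          - 2 * F.card + 12 ≤ 4 * D.card := by
  classical
  have hc := hT.isConnected
  set Lset := univ.filter (fun v => T.degree v = 1) with hLsetdef
  -- every vertex has positive degree
  have hdegpos : ∀ v : V, 0 < T.degree v := by
    intro v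
    rw [SimpleGraph.degree_pos_iff_exists_adj]
    obtain ⟨u, hu⟩ := Fintype.exists_ne_of_one_lt_card (by omega) v
    obtain ⟨p⟩ := hc.preconnected v u
    obtain ⟨w, h, q, _⟩ := SimpleGraph.Walk.exists_eq_cons_of_ne (Ne.symm hu) p
    exact ⟨w, h⟩
  -- degree sum formula
  have hsum : (∑ v : V, (T.degree v : ℤ)) = 2 * (Fintype.card V : ℤ) - 2 := by
    have h1 := T.sum_degrees_eq_twice_card_edges
    have h2 := hT.card_edgeFinset
    have h3 : (T.edgeFinset.card : ℤ) + 1 = Fintype.card V := by exact_mod_cast congrArg (Nat.cast (R := ℤ)) h2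
    have h4 : (∑ v : V, (T.degree v : ℤ)) = 2 * (T.edgeFinset.card : ℤ) := by exact_mod_cast h1
    linarith
  -- sum over branch vertices
  have hS3 : ∑ w ∈ univ.filter (fun w => 3 ≤ T.degree w), ((T.degree w : ℤ) - 2)
      = (Lset.card : ℤ) - 2 := by
    have hsplit1 := Finset.sum_filter_add_sum_filter_not univ (fun v => T.degree v = 1)
      (fun v => (T.degree v : ℤ) - 2)
    have hsplit2 := Finset.sum_filter_add_sum_filter_not
      (univ.filter (fun v => ¬ T.degree v = 1)) (fun v => T.degree v = 2)
      (fun v => (T.degree v : ℤ) - 2)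
    have e1 : (univ.filter (fun v => ¬ T.degree v = 1)).filter (fun v => T.degree v = 2)
        = univ.filter (fun v => T.degree v = 2) := by
      ext v; simp only [mem_filter, mem_univ, true_and, Finset.filter_filter]; omega
    have e2 : (univ.filter (fun v => ¬ T.degree v = 1)).filter (fun v => ¬ T.degree v = 2)
        = univ.filter (fun v => 3 ≤ T.degree v) := by
      ext v; have := hdegpos v
      simp only [mem_filter, mem_univ, true_and, Finset.filter_filter]; omega
    have s1 : ∑ v ∈ Lset, ((T.degree v : ℤ) - 2) = -(Lset.card : ℤ) := by
      rw [Finset.sum_congr rfl (g := fun _ => (-1 : ℤ)) ?_]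
      · simp
      · intro v hv
        rw [hLsetdef, mem_filter] at hv
        rw [hv.2]; norm_num
    have s2 : ∑ v ∈ univ.filter (fun v => T.degree v = 2), ((T.degree v : ℤ) - 2) = 0 := by
      apply Finset.sum_eq_zero
      intro v hv
      rw [mem_filter] at hv
      rw [hv.2]; norm_num
    rw [e1, e2] at hsplit2
    rw [← hLsetdef] at hsplit1
    rw [s1] at hsplit1
    rw [s2] at hsplit2
    have hsum2 : ∑ v : V, ((T.degree v : ℤ) - 2) = -2 := by
      rw [Finset.sum_sub_distrib, hsum, Finset.sum_const, Finset.card_univ]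
      push_cast
      ring
    linarith [hsum2]
  -- a root leaf
  obtain ⟨r, hr⟩ : ∃ r : V, T.degree r = 1 := by
    by_contra hno
    push_neg at hno
    have h2 : ∀ v : V, 2 ≤ T.degree v := fun v => by
      have := hdegpos v; have := hno v; omega
    have hle : (∑ v : V, (2 : ℤ)) ≤ ∑ v : V, (T.degree v : ℤ) :=
      Finset.sum_le_sum (fun v _ => by exact_mod_cast h2 v)
    rw [Finset.sum_const, Finset.card_univ, nsmul_eq_mul] at hle
    push_cast at hle
    linarith
  -- distances
  have hadj : ∀ {u w : V}, T.Adj u w →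
      T.dist r w + 1 = T.dist r u ∨ T.dist r u + 1 = T.dist r w :=
    fun h => aux_adj_dist hc A hA1 hA2 r h
  have hparu : ∀ {w x y : V}, T.Adj x w → T.Adj y w →
      T.dist r x + 1 = T.dist r w → T.dist r y + 1 = T.dist r w → x = y :=
    fun hx hy hdx hdy => aux_unique_parent hT r hx hy hdx hdy
  have hpaex : ∀ u : V, u ≠ r → ∃ w, T.Adj u w ∧ T.dist r w + 1 = T.dist r u :=
    fun u hu => aux_exists_parent hc r hu
  obtain ⟨pa, hpa_spec⟩ : ∃ pa : V → V, ∀ u : V, u ≠ r →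
      T.Adj u (pa u) ∧ T.dist r (pa u) + 1 = T.dist r u := by
    refine ⟨fun u => if h : ∃ w, T.Adj u w ∧ T.dist r w + 1 = T.dist r u then h.choose else u,
      fun u hu => ?_⟩
    have h := hpaex u hu
    simp only [dif_pos h]
    exact h.choose_spec
  have hpa_eq : ∀ {u w : V}, T.Adj u w → T.dist r w + 1 = T.dist r u → w = pa u := by
    intro u w h hd
    have hur : u ≠ r := by
      intro he
      rw [he, SimpleGraph.dist_self] at hd
      omega
    have hs := hpa_spec u hur
    exact hparu h.symm hs.1.symm hd hs.2
  -- the filtered set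
  set A2 := A.filter (fun v => T.degree v = 2 ∧ (∀ u : V, T.degree u = 1 → ¬ T.Adj v u) ∧ v ∉ F)
    with hA2def
  have hA2r : ∀ v ∈ A2, v ≠ r := by
    intro v hv he
    rw [hA2def, mem_filter] at hv
    rw [he] at hv
    omega
  -- counting A2
  have hWcard : (A.filter (fun v => T.degree v = 1 ∨ ∃ u, T.degree u = 1 ∧ T.Adj v u)).card
      ≤ Lset.card := by
    set W := A.filter (fun v => T.degree v = 1 ∨ ∃ u, T.degree u = 1 ∧ T.Adj v u) with hWdef
    apply Finset.card_le_card_of_injOn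
      (fun v => if T.degree v = 1 then v
        else if h : ∃ u, T.degree u = 1 ∧ T.Adj v u then h.choose else v)
    · intro v hv
      rw [hWdef, Finset.mem_coe, mem_filter] at hv
      by_cases h1 : T.degree v = 1
      · simp only [if_pos h1, hLsetdef, Finset.mem_coe, mem_filter, mem_univ, true_and]; exact h1
      · have h2 : ∃ u, T.degree u = 1 ∧ T.Adj v u := hv.2.resolve_left h1
        simp only [if_neg h1, dif_pos h2, hLsetdef, Finset.mem_coe, mem_filter, mem_univ, true_and]
        exact h2.choose_spec.1
    · intro v1 hv1 v2 hv2 he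
      rw [Finset.mem_coe, hWdef, mem_filter] at hv1
      rw [Finset.mem_coe, hWdef, mem_filter] at hv2
      by_cases h1 : T.degree v1 = 1 <;> by_cases h2 : T.degree v2 = 1
      · simpa [if_pos h1, if_pos h2] using he
      · exfalso
        have hx2 : ∃ u, T.degree u = 1 ∧ T.Adj v2 u := hv2.2.resolve_left h2
        simp only [if_pos h1, if_neg h2, dif_pos hx2] at he
        have := hx2.choose_spec.2
        rw [← he] at this
        exact hA1 v2 hv2.1 v1 hv1.1 this
      · exfalso
        have hx1 : ∃ u, T.degree u = 1 ∧ T.Adj v1 u := hv1.2.resolve_left h1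
        simp only [if_neg h1, if_pos h2, dif_pos hx1] at he
        have := hx1.choose_spec.2
        rw [he] at this
        exact hA1 v1 hv1.1 v2 hv2.1 this
      · have hx1 : ∃ u, T.degree u = 1 ∧ T.Adj v1 u := hv1.2.resolve_left h1
        have hx2 : ∃ u, T.degree u = 1 ∧ T.Adj v2 u := hv2.2.resolve_left h2
        simp only [if_neg h1, if_neg h2, dif_pos hx1, dif_pos hx2] at he
        set ℓ := hx1.choose with hl
        have hs1 := hx1.choose_spec
        have hs2 := hx2.choose_spec
        have hdegl : (T.neighborFinset ℓ).card ≤ 1 := by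
          rw [SimpleGraph.card_neighborFinset_eq_degree, hs1.1]
        apply Finset.card_le_one.1 hdegl
        · rw [SimpleGraph.mem_neighborFinset]; exact hs1.2.symm
        · rw [SimpleGraph.mem_neighborFinset]
          rw [he]
          exact hs2.2.symm
  have hbranchA : ((A.filter (fun v => 3 ≤ T.degree v)).card : ℤ) ≤ (Lset.card : ℤ) - 2 := by
    have c1 : ((A.filter (fun v => 3 ≤ T.degree v)).card : ℤ)
        ≤ ∑ w ∈ A.filter (fun v => 3 ≤ T.degree v), ((T.degree w : ℤ) - 2) := by
      rw [Finset.card_eq_sum_ones (A.filter (fun v => 3 ≤ T.degree v))]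
      push_cast
      apply Finset.sum_le_sum
      intro w hw
      rw [mem_filter] at hw
      have := hw.2
      push_cast
      omega
    have c2 : ∑ w ∈ A.filter (fun v => 3 ≤ T.degree v), ((T.degree w : ℤ) - 2)
        ≤ ∑ w ∈ univ.filter (fun w => 3 ≤ T.degree w), ((T.degree w : ℤ) - 2) := by
      apply Finset.sum_le_sum_of_subset_of_nonneg
      · exact Finset.filter_subset_filter _ (Finset.subset_univ A)
      · intro w hw _
        rw [mem_filter] at hw
        have := hw.2
        push_cast
        omega
    rw [hS3] at c2
    linarith
  have hcover : A ⊆ A2 ∪ (A.filter (fun v => T.degree v = 1 ∨ ∃ u, T.degree u = 1 ∧ T.Adj v u))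
      ∪ A.filter (fun v => 3 ≤ T.degree v) ∪ (A ∩ F) := by
    intro v hv
    simp only [mem_union, mem_inter, mem_filter]
    by_cases hF : v ∈ F
    · right; exact ⟨hv, hF⟩
    by_cases hd1 : T.degree v = 1
    · left; left; right; exact ⟨hv, Or.inl hd1⟩
    by_cases hd3 : 3 ≤ T.degree v
    · left; right; exact ⟨hv, hd3⟩
    have hd2 : T.degree v = 2 := by have := hdegpos v; omega
    by_cases hleaf : ∃ u, T.degree u = 1 ∧ T.Adj v u
    · left; left; right; exact ⟨hv, Or.inr hleaf⟩
    · left; left; left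
      rw [hA2def, mem_filter]
      push_neg at hleaf
      exact ⟨hv, hd2, hleaf, hF⟩
  have hAcount : (A.card : ℤ) ≤ (A2.card : ℤ) + (Lset.card : ℤ) + ((Lset.card : ℤ) - 2)
      + (F.card : ℤ) := by
    have h1 := Finset.card_le_card hcover
    have h2 := Finset.card_union_le (A2 ∪ (A.filter (fun v => T.degree v = 1 ∨ ∃ u, T.degree u = 1 ∧ T.Adj v u)) ∪ A.filter (fun v => 3 ≤ T.degree v)) (A ∩ F)
    have h3 := Finset.card_union_le (A2 ∪ (A.filter (fun v => T.degree v = 1 ∨ ∃ u, T.degree u = 1 ∧ T.Adj v u))) (A.filter (fun v => 3 ≤ T.degree v))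
    have h4 := Finset.card_union_le A2 (A.filter (fun v => T.degree v = 1 ∨ ∃ u, T.degree u = 1 ∧ T.Adj v u))
    have h5 : (A ∩ F).card ≤ F.card := Finset.card_le_card (Finset.inter_subset_right)
    have h6 := hWcard
    push_cast
    push_cast at hbranchA
    omega
  -- residue split
  obtain ⟨A1, hA1sub, hA1res, hA1card⟩ :
      ∃ A1 : Finset V, A1 ⊆ A2 ∧
        ((∀ v ∈ A1, T.dist r v % 4 ≤ 1) ∨ (∀ v ∈ A1, 2 ≤ T.dist r v % 4)) ∧
        A2.card ≤ 2 * A1.card := by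
    have hE := Finset.card_filter_add_card_filter_not
      (s := A2) (p := fun v => T.dist r v % 4 ≤ 1)
    rcases le_total ((A2.filter (fun v => T.dist r v % 4 ≤ 1)).card)
      ((A2.filter (fun v => ¬ T.dist r v % 4 ≤ 1)).card) with h | h
    · refine ⟨A2.filter (fun v => ¬ T.dist r v % 4 ≤ 1), Finset.filter_subset _ _,
        Or.inr ?_, by omega⟩
      intro v hv
      rw [mem_filter] at hv
      omega
    · refine ⟨A2.filter (fun v => T.dist r v % 4 ≤ 1), Finset.filter_subset _ _,
        Or.inl ?_, by omega⟩
      intro v hv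
      rw [mem_filter] at hv
      omega
  -- vertices of A1 have a parent
  have hA1par : ∀ u ∈ A1, T.Adj u (pa u) ∧ T.dist r (pa u) + 1 = T.dist r u :=
    fun u hu => hpa_spec u (hA2r u (hA1sub hu))
  -- representative choice
  obtain ⟨g, hg⟩ : ∃ g : V → V, ∀ w ∈ A1.image pa, g w ∈ A1 ∧ pa (g w) = w := by
    refine ⟨fun w => if h : ∃ u ∈ A1, pa u = w then h.choose else w, fun w hw => ?_⟩
    rw [Finset.mem_image] at hw
    obtain ⟨u, hu, hue⟩ := hw
    have h : ∃ u ∈ A1, pa u = w := ⟨u, hu, hue⟩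
    simp only [dif_pos h]
    exact ⟨h.choose_spec.1, h.choose_spec.2⟩
  set D := (A1.image pa).image g with hDdef
  have hDsub : D ⊆ A1 := by
    intro x hx
    rw [hDdef, Finset.mem_image] at hx
    obtain ⟨w, hw, hwe⟩ := hx
    rw [← hwe]
    exact (hg w hw).1
  have hDfix : ∀ x ∈ D, pa x ∈ A1.image pa ∧ g (pa x) = x := by
    intro x hx
    rw [hDdef, Finset.mem_image] at hx
    obtain ⟨w, hw, hwe⟩ := hx
    have h2 := (hg w hw).2
    have hpx : pa x = w := by rw [← hwe]; exact h2
    rw [hpx]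
    exact ⟨hw, hwe⟩
  have hDinj : ∀ x ∈ D, ∀ y ∈ D, pa x = pa y → x = y := by
    intro x hx y hy he
    have h1 := (hDfix x hx).2
    have h2 := (hDfix y hy).2
    rw [← h1, ← h2, he]
  have hDcard : D.card = (A1.image pa).card := by
    rw [hDdef]
    apply Finset.card_image_of_injOn
    intro w1 hw1 w2 hw2 he
    have h1 := (hg w1 hw1).2
    have h2 := (hg w2 hw2).2
    rw [← h1, ← h2, he]
  -- fiber counting
  have hfibcount : (A1.card : ℤ) - ((A1.image pa).card : ℤ) ≤ (Lset.card : ℤ) - 2 := by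
    have hsum1 : A1.card = ∑ w ∈ A1.image pa, (A1.filter (fun u => pa u = w)).card :=
      Finset.card_eq_sum_card_image pa A1
    have hfib1 : ∀ w ∈ A1.image pa, 1 ≤ (A1.filter (fun u => pa u = w)).card := by
      intro w hw
      rw [Finset.mem_image] at hw
      obtain ⟨u, hu, hue⟩ := hw
      rw [Nat.one_le_iff_ne_zero, ← Nat.pos_iff_ne_zero, Finset.card_pos]
      exact ⟨u, Finset.mem_filter.2 ⟨hu, hue⟩⟩
    have hkey : ∀ w ∈ A1.image pa, 2 ≤ (A1.filter (fun u => pa u = w)).card →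
        3 ≤ T.degree w ∧ (A1.filter (fun u => pa u = w)).card + 1 ≤ T.degree w := by
      intro w hw hfib
      have hmem : ∀ u ∈ A1.filter (fun u => pa u = w),
          T.Adj w u ∧ T.dist r u = T.dist r w + 1 := by
        intro u hu
        rw [mem_filter] at hu
        have hp := hA1par u hu.1
        rw [hu.2] at hp
        exact ⟨hp.1.symm, by omega⟩
      have hwr : w ≠ r := by
        intro he
        obtain ⟨u, hu, v, hv, huv⟩ := Finset.one_lt_card.1
          (show 1 < (A1.filter (fun u => pa u = w)).card by omega)
        have hnb : (T.neighborFinset w).card ≤ 1 := by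
          rw [SimpleGraph.card_neighborFinset_eq_degree, he, hr]
        exact huv (Finset.card_le_one.1 hnb u
          (by rw [SimpleGraph.mem_neighborFinset]; exact (hmem u hu).1) v
          (by rw [SimpleGraph.mem_neighborFinset]; exact (hmem v hv).1))
      obtain ⟨x, hx, hdx⟩ := hpaex w hwr
      have hxnb : x ∈ T.neighborFinset w := by
        rw [SimpleGraph.mem_neighborFinset]; exact hx
      have hsub : A1.filter (fun u => pa u = w) ⊆ (T.neighborFinset w).erase x := by
        intro u hu
        rw [Finset.mem_erase, SimpleGraph.mem_neighborFinset]
        refine ⟨?_, (hmem u hu).1⟩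
        intro he
        have := (hmem u hu).2
        rw [he] at this
        omega
      have hcard := Finset.card_le_card hsub
      rw [Finset.card_erase_of_mem hxnb, SimpleGraph.card_neighborFinset_eq_degree] at hcard
      have := hdegpos w
      omega
    have heq : (A1.card : ℤ) - ((A1.image pa).card : ℤ)
        = ∑ w ∈ A1.image pa, (((A1.filter (fun u => pa u = w)).card : ℤ) - 1) := by
      rw [Finset.sum_sub_distrib, Finset.sum_const, hsum1]
      push_cast
      ring
    rw [heq]
    have hsplit := Finset.sum_filter_add_sum_filter_not (A1.image pa)
      (fun w => 2 ≤ (A1.filter (fun u => pa u = w)).card)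
      (fun w => ((A1.filter (fun u => pa u = w)).card : ℤ) - 1)
    have hz : ∑ w ∈ (A1.image pa).filter
        (fun w => ¬ 2 ≤ (A1.filter (fun u => pa u = w)).card),
        (((A1.filter (fun u => pa u = w)).card : ℤ) - 1) = 0 := by
      apply Finset.sum_eq_zero
      intro w hw
      rw [mem_filter] at hw
      have := hfib1 w hw.1
      have h2 := hw.2
      have : (A1.filter (fun u => pa u = w)).card = 1 := by omega
      rw [this]
      norm_num
    have hb : ∑ w ∈ (A1.image pa).filter
        (fun w => 2 ≤ (A1.filter (fun u => pa u = w)).card),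
        (((A1.filter (fun u => pa u = w)).card : ℤ) - 1)
        ≤ ∑ w ∈ univ.filter (fun w => 3 ≤ T.degree w), ((T.degree w : ℤ) - 2) := by
      have hb1 : ∀ w ∈ (A1.image pa).filter
          (fun w => 2 ≤ (A1.filter (fun u => pa u = w)).card),
          (((A1.filter (fun u => pa u = w)).card : ℤ) - 1) ≤ (T.degree w : ℤ) - 2 := by
        intro w hw
        rw [mem_filter] at hw
        have := (hkey w hw.1 hw.2).2
        push_cast
        omega
      calc ∑ w ∈ (A1.image pa).filter
            (fun w => 2 ≤ (A1.filter (fun u => pa u = w)).card),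
            (((A1.filter (fun u => pa u = w)).card : ℤ) - 1)
          ≤ ∑ w ∈ (A1.image pa).filter
            (fun w => 2 ≤ (A1.filter (fun u => pa u = w)).card), ((T.degree w : ℤ) - 2) :=
            Finset.sum_le_sum hb1
        _ ≤ ∑ w ∈ univ.filter (fun w => 3 ≤ T.degree w), ((T.degree w : ℤ) - 2) := by
            apply Finset.sum_le_sum_of_subset_of_nonneg
            · intro w hw
              rw [mem_filter] at hw
              rw [mem_filter]
              exact ⟨mem_univ w, (hkey w hw.1 hw.2).1⟩
            · intro w hw _
              rw [mem_filter] at hw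
              have := hw.2
              push_cast
              omega
    rw [hS3] at hb
    omega
  -- final verification
  refine ⟨D, ?_, ?_, ?_, ?_, ?_, ?_⟩
  · exact hDsub.trans (hA1sub.trans (Finset.filter_subset _ _))
  · rw [Finset.disjoint_left]
    intro x hx
    have := hA1sub (hDsub hx)
    rw [hA2def, mem_filter] at this
    exact this.2.2.2
  · intro v hv
    have := hA1sub (hDsub hv)
    rw [hA2def, mem_filter] at this
    exact this.2.1
  · intro v hv
    have := hA1sub (hDsub hv)
    rw [hA2def, mem_filter] at this
    exact this.2.2.1
  · intro u hu v hv huv w ⟨h1, h2⟩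
    have hres : (T.dist r u % 4 ≤ 1 ∧ T.dist r v % 4 ≤ 1)
        ∨ (2 ≤ T.dist r u % 4 ∧ 2 ≤ T.dist r v % 4) := by
      rcases hA1res with h | h
      · exact Or.inl ⟨h u (hDsub hu), h v (hDsub hv)⟩
      · exact Or.inr ⟨h u (hDsub hu), h v (hDsub hv)⟩
    rcases hadj h1 with c1 | c1 <;> rcases hadj h2 with c2 | c2
    · -- w is parent of both u and v
      have e1 := hpa_eq h1 c1
      have e2 := hpa_eq h2 c2
      exact huv (hDinj u hu v hv (by rw [← e1, ← e2]))
    · rcases hres with ⟨a, b⟩ | ⟨a, b⟩ <;> omega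
    · rcases hres with ⟨a, b⟩ | ⟨a, b⟩ <;> omega
    · exact huv (hparu h1 h2 c1 c2)
  · have h1 : (D.card : ℤ) = ((A1.image pa).card : ℤ) := by exact_mod_cast hDcard
    have h2 : (A2.card : ℤ) ≤ 2 * (A1.card : ℤ) := by exact_mod_cast hA1card
    have h3 : (Fintype.card V : ℤ) ≤ 2 * (A.card : ℤ) := by exact_mod_cast hA3
    linarith [hfibcount, hAcount]
end

section
/- Let T be a tree with |V(T)| ≥ 3. Then there is a vertex v ∈ V(T) such that the vertex set of the forest T − v can be partitioned into two sets K and H with no edges of T between K and H, and (|V(T)| − 1)/3 ≤ |K|, |H| ≤ 2(|V(T)| − 1)/3. -/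
open Finset SimpleGraph Walk

namespace TBS

variable {V : Type*} [Fintype V] [DecidableEq V] {T : SimpleGraph V} {r : V}

variable (pa : ∀ u : V, T.Walk r u)

/-- The rooted subtree at `w`: vertices whose unique path from `r` passes through `w`. -/
def D (w : V) : Finset V := univ.filter fun u => w ∈ (pa u).support

lemma mem_D {w u : V} : u ∈ D pa w ↔ w ∈ (pa u).support := by simp [D]

lemma self_mem_D (w : V) : w ∈ D pa w := mem_D pa |>.mpr (end_mem_support _)

lemma isPath_concat {a b : V} {p : T.Walk r a} (hpp : p.IsPath) (e : T.Adj a b)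
    (hb : b ∉ p.support) : (p.concat e).IsPath := by
  rw [isPath_def, support_concat]
  rw [List.nodup_append]
  refine ⟨hpp.support_nodup, List.nodup_singleton _, ?_⟩
  intro x hx y hx' hxy
  rw [List.mem_singleton] at hx'
  subst hx' hxy
  exact hb hx

variable (hp : ∀ u, (pa u).IsPath) (hu : ∀ u (q : T.Walk r u), q.IsPath → q = pa u)

set_option linter.unusedSectionVars false

include hp hu

lemma takeUntil_eq {u w : V} (h : w ∈ (pa u).support) :
    (pa u).takeUntil w h = pa w := hu w _ ((hp u).takeUntil h)

lemma mem_support_trans {u c w : V} (h1 : w ∈ (pa c).support) (h2 : c ∈ (pa u).support) :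
    w ∈ (pa u).support := by
  rw [← takeUntil_eq pa hp hu h2] at h1
  exact support_takeUntil_subset _ _ h1

lemma exists_parent {u : V} (hur : u ≠ r) :
    ∃ (b : V) (e : T.Adj b u), pa u = (pa b).concat e := by
  have hnil : ¬ (pa u).reverse.Nil := not_nil_of_ne hur
  obtain ⟨x, e, q, hq⟩ := not_nil_iff.mp hnil
  have hrec : pa u = q.reverse.concat e.symm := by
    have := congrArg Walk.reverse hq
    rw [reverse_reverse, reverse_cons] at this
    rw [this, concat_eq_append]
  have hqpath : q.reverse.IsPath := by
    have h1 : (pa u).reverse.IsPath := (hp u).reverse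
    rw [hq, cons_isPath_iff] at h1
    exact h1.1.reverse
  exact ⟨x, e.symm, by rw [hrec, hu x q.reverse hqpath]⟩

lemma parent_unique {u b b' : V} {e : T.Adj b u} {e' : T.Adj b' u}
    (h : (pa b).concat e = (pa b').concat e') : b = b' := (concat_inj h).1


lemma adj_dichotomy (hT : T.IsTree) {a b : V} (e : T.Adj a b) :
    pa b = (pa a).concat e ∨ ∃ e' : T.Adj b a, pa a = (pa b).concat e' := by
  by_cases hb : b ∈ (pa a).support
  · right
    refine ⟨e.symm, ?_⟩
    have hd : (pa a).dropUntil b hb = cons e.symm nil := by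
      refine (hT.existsUnique_path b a).unique ((hp a).dropUntil hb) ?_
      simp [cons_isPath_iff, e.ne']
    conv_lhs => rw [← take_spec (pa a) hb]
    rw [takeUntil_eq pa hp hu hb, hd, concat_eq_append]
  · left
    exact (hu b ((pa a).concat e) (isPath_concat (hp a) e hb)).symm

/-- `c` is a child of `v` in the tree rooted at `r`. -/
def IsChild (v c : V) : Prop := ∃ e : T.Adj v c, pa c = (pa v).concat e

lemma child_not_mem_path {v c : V} (hc : IsChild pa v c) : c ∉ (pa v).support := by
  obtain ⟨e, he⟩ := hc
  have h1 : (pa c).support.Nodup := (hp c).support_nodup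
  rw [he, support_concat, List.nodup_append] at h1
  intro hmem
  exact h1.2.2 c hmem c (List.mem_singleton_self c) rfl

lemma mem_D_of_child {v c : V} (hc : IsChild pa v c) : c ∈ D pa v := by
  obtain ⟨e, he⟩ := hc
  rw [mem_D, he, concat_eq_append]
  exact subset_support_append_left _ _ (end_mem_support _)

lemma D_child_subset {v c : V} (hc : IsChild pa v c) : D pa c ⊆ D pa v := by
  intro u hu'
  rw [mem_D] at hu' ⊢
  exact mem_support_trans pa hp hu ((mem_D pa).mp (mem_D_of_child pa hp hu hc)) hu'

lemma v_not_mem_D_child {v c : V} (hc : IsChild pa v c) : v ∉ D pa c := by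
  rw [mem_D]
  exact child_not_mem_path pa hp hu hc

lemma card_D_child_lt {v c : V} (hc : IsChild pa v c) : (D pa c).card < (D pa v).card :=
  card_lt_card (ssubset_iff_of_subset (D_child_subset pa hp hu hc) |>.mpr
    ⟨v, self_mem_D pa v, v_not_mem_D_child pa hp hu hc⟩)

lemma getVert_of_mem_D_child {v c u : V} (hc : IsChild pa v c) (h : u ∈ D pa c) :
    (pa u).getVert ((pa v).length + 1) = c := by
  rw [mem_D] at h
  obtain ⟨e, he⟩ := hc
  have hsp : (pa c).append ((pa u).dropUntil c h) = pa u := by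
    rw [← takeUntil_eq pa hp hu h]; exact take_spec _ h
  have hlen : (pa c).length = (pa v).length + 1 := by rw [he, length_concat]
  rw [← hsp, getVert_append, ← hlen]
  simp

lemma D_children_disjoint {v c c' : V} (hc : IsChild pa v c) (hc' : IsChild pa v c')
    (hne : c ≠ c') : Disjoint (D pa c) (D pa c') := by
  rw [Finset.disjoint_left]
  intro u h1 h2
  exact hne ((getVert_of_mem_D_child pa hp hu hc h1).symm.trans
    (getVert_of_mem_D_child pa hp hu hc' h2))

lemma pa_r_eq_nil : pa r = Walk.nil := (hu r Walk.nil IsPath.nil).symm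

lemma exists_child_of_mem_D {v : V} :
    ∀ (n : ℕ) (u : V), (pa u).length = n → u ∈ D pa v → u ≠ v →
      ∃ c, IsChild pa v c ∧ u ∈ D pa c := by
  intro n
  induction n using Nat.strong_induction_on with
  | _ n ih =>
    intro u hlen hmem hne
    have hur : u ≠ r := by
      rintro rfl
      rw [mem_D, pa_r_eq_nil pa hp hu] at hmem
      simp at hmem
      exact hne hmem.symm
    obtain ⟨b, e, he⟩ := exists_parent pa hp hu hur
    have hvb : v ∈ (pa b).support := by
      rw [mem_D] at hmem
      rw [he, support_concat, List.mem_append] at hmem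
      rcases hmem with h | h
      · exact h
      · simp at h; exact absurd h.symm hne
    by_cases hbv : b = v
    · subst hbv
      exact ⟨u, ⟨e, he⟩, self_mem_D pa u⟩
    · have hblen : (pa b).length < n := by
        rw [← hlen, he, length_concat]; omega
      obtain ⟨c, hc, hbc⟩ := ih _ hblen b rfl ((mem_D pa).mpr hvb) hbv
      refine ⟨c, hc, (mem_D pa).mpr ?_⟩
      have : c ∈ (pa b).support := (mem_D pa).mp hbc
      rw [he, concat_eq_append]
      exact subset_support_append_left _ _ this

lemma adj_closed_D_child (hT : T.IsTree) {v c a b : V} (hc : IsChild pa v c)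
    (e : T.Adj a b) (hb : b ≠ v) (ha : a ∈ D pa c) : b ∈ D pa c := by
  rw [mem_D] at ha ⊢
  rcases adj_dichotomy pa hp hu hT e with h | ⟨e', h⟩
  · rw [h, concat_eq_append]
    exact subset_support_append_left _ _ ha
  · rw [h, support_concat, List.mem_append] at ha
    rcases ha with h' | h'
    · exact h'
    · simp at h'
      subst h'
      obtain ⟨e'', he''⟩ := hc
      have heq : (pa v).concat e'' = (pa b).concat e' := he''.symm.trans h
      exact (hb (parent_unique pa hp hu heq).symm).elim

lemma adj_closed_R (hT : T.IsTree) {v a b : V} (ha : a ∉ D pa v) (e : T.Adj a b)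
    (hb : b ≠ v) : b ∉ D pa v := by
  intro hbD
  apply ha
  rw [mem_D] at hbD ⊢
  rcases adj_dichotomy pa hp hu hT e with h | ⟨e', h⟩
  · rw [h, support_concat, List.mem_append] at hbD
    rcases hbD with h' | h'
    · exact h'
    · simp at h'; exact absurd h'.symm hb
  · rw [h, concat_eq_append]
    exact subset_support_append_left _ _ hbD

end TBS
/-- **Lemma 2**: every tree `T` on at least 3 vertices has a vertex `v` such that the
vertices of the forest `T - v` can be partitioned into sets `K` and `H` with no edges
between them and `(|V(T)| - 1)/3 ≤ |K|, |H| ≤ 2(|V(T)| - 1)/3`. -/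
theorem tree_balanced_split {V : Type*} [Fintype V] [DecidableEq V]
    (T : SimpleGraph V) (hT : T.IsTree) (hV : 3 ≤ Fintype.card V) :
    ∃ (v : V) (K H : Finset V), Disjoint K H ∧ K ∪ H = univ \ {v} ∧
      (∀ a ∈ K, ∀ b ∈ H, ¬ T.Adj a b) ∧
      Fintype.card V - 1 ≤ 3 * K.card ∧ 3 * K.card ≤ 2 * (Fintype.card V - 1) ∧
      Fintype.card V - 1 ≤ 3 * H.card ∧ 3 * H.card ≤ 2 * (Fintype.card V - 1) := by
  classical
  set n := Fintype.card V with hn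
  have hVne : Nonempty V := Fintype.card_pos_iff.mp (by omega)
  obtain ⟨r⟩ := hVne
  choose pa hp hu using hT.existsUnique_path r
  -- the set of vertices with big subtree
  set P : Finset V := univ.filter (fun v => 2*(n-1) < 3*(TBS.D pa v).card) with hP
  have hDr : TBS.D pa r = univ :=
    Finset.eq_univ_of_forall fun u => (TBS.mem_D pa).mpr (SimpleGraph.Walk.start_mem_support _)
  have hrP : r ∈ P := by
    simp only [hP, mem_filter, mem_univ, true_and, hDr, card_univ]
    omega
  obtain ⟨v, hvP, hvmin⟩ := P.exists_min_image (fun w => (TBS.D pa w).card) ⟨r, hrP⟩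
  have hv2 : 2*(n-1) < 3*(TBS.D pa v).card := (mem_filter.mp hvP).2
  have hchild_le : ∀ c, TBS.IsChild pa v c → 3*(TBS.D pa c).card ≤ 2*(n-1) := by
    intro c hc
    by_contra hcon
    push_neg at hcon
    have hcP : c ∈ P := by
      simp only [hP, mem_filter, mem_univ, true_and]; omega
    have h1 := hvmin c hcP
    have h2 := TBS.card_D_child_lt pa hp hu hc
    omega
  set C : Finset V := univ.filter (fun c => TBS.IsChild pa v c) with hC
  set R : Finset V := univ \ TBS.D pa v with hR
  have hRcard : R.card = n - (TBS.D pa v).card := by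
    rw [hR, card_sdiff_of_subset (subset_univ _), card_univ]
  have hDcard_le : (TBS.D pa v).card ≤ n := by
    rw [hn]; exact card_le_univ _
  have hcover : TBS.D pa v \ {v} = C.biUnion (TBS.D pa) := by
    ext u
    simp only [mem_sdiff, mem_singleton, mem_biUnion, hC, mem_filter, mem_univ, true_and]
    constructor
    · rintro ⟨h1, h2⟩
      exact TBS.exists_child_of_mem_D pa hp hu _ u rfl h1 h2
    · rintro ⟨c, hc, hcu⟩
      exact ⟨TBS.D_child_subset pa hp hu hc hcu,
        fun h => TBS.v_not_mem_D_child pa hp hu hc (h ▸ hcu)⟩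
  have hchildC : ∀ c ∈ C, TBS.IsChild pa v c := by
    intro c hc; simpa [hC] using hc
  have hdisjC : ∀ c ∈ C, ∀ c' ∈ C, c ≠ c' → Disjoint (TBS.D pa c) (TBS.D pa c') := by
    intro c hc c' hc' hne
    exact TBS.D_children_disjoint pa hp hu (hchildC c hc) (hchildC c' hc') hne
  have hsumC : ∑ c ∈ C, (TBS.D pa c).card = (TBS.D pa v).card - 1 := by
    rw [← card_biUnion hdisjC, ← hcover,
      card_sdiff_of_subset (singleton_subset_iff.mpr (TBS.self_mem_D pa v)), card_singleton]
  have hcard_sdiff_univ : (univ \ {v} : Finset V).card = n - 1 := by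
    rw [card_sdiff_of_subset (singleton_subset_iff.mpr (mem_univ v)), card_univ, card_singleton]
  -- the common finishing step
  have finish : ∀ K : Finset V, K ⊆ univ \ {v} →
      (∀ a ∈ K, ∀ b, b ≠ v → T.Adj a b → b ∈ K) →
      n - 1 ≤ 3*K.card → 3*K.card ≤ 2*(n-1) →
      ∃ (v : V) (K H : Finset V), Disjoint K H ∧ K ∪ H = univ \ {v} ∧
        (∀ a ∈ K, ∀ b ∈ H, ¬ T.Adj a b) ∧
        n - 1 ≤ 3 * K.card ∧ 3 * K.card ≤ 2 * (n - 1) ∧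
        n - 1 ≤ 3 * H.card ∧ 3 * H.card ≤ 2 * (n - 1) := by
    intro K hKsub hKcl h1 h2
    have hKcard_le : K.card ≤ n - 1 := hcard_sdiff_univ ▸ card_le_card hKsub
    have hHc : ((univ \ {v}) \ K).card = (n-1) - K.card := by
      rw [card_sdiff_of_subset hKsub, hcard_sdiff_univ]
    refine ⟨v, K, (univ \ {v}) \ K, disjoint_sdiff, union_sdiff_of_subset hKsub, ?_,
      h1, h2, ?_, ?_⟩
    · intro a ha b hb hadj
      rw [mem_sdiff] at hb
      have hbv : b ≠ v := by
        have h3 := hb.1; rw [mem_sdiff, mem_singleton] at h3; exact h3.2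
      exact hb.2 (hKcl a ha b hbv hadj)
    · rw [hHc]; omega
    · rw [hHc]; omega
  by_cases hbig : ∃ c ∈ C, n - 1 ≤ 3 * (TBS.D pa c).card
  · -- Case A : one child subtree is already balanced
    obtain ⟨c, hcC, hcbig⟩ := hbig
    have hc : TBS.IsChild pa v c := hchildC c hcC
    apply finish (TBS.D pa c)
    · intro u hu'
      rw [mem_sdiff, mem_singleton]
      exact ⟨mem_univ _, fun h => TBS.v_not_mem_D_child pa hp hu hc (h ▸ hu')⟩
    · intro a ha b hbv hadj
      exact TBS.adj_closed_D_child pa hp hu hT hc hadj hbv ha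
    · exact hcbig
    · exact hchild_le c hc
  · -- Case B : all child subtrees are small; greedily collect them together with R
    push_neg at hbig
    have hgC : R.card + ∑ c ∈ C, (TBS.D pa c).card = n - 1 := by
      rw [hsumC, hRcard]; omega
    set SS := C.powerset.filter (fun S => n - 1 ≤ 3 * (R.card + ∑ c ∈ S, (TBS.D pa c).card))
      with hSS
    have hCSS : C ∈ SS := by
      rw [hSS, mem_filter, mem_powerset, hgC]
      exact ⟨Subset.rfl, by omega⟩
    obtain ⟨S, hSmem, hSmin⟩ := SS.exists_min_image card ⟨C, hCSS⟩
    have hSsub : S ⊆ C := mem_powerset.mp (mem_filter.mp hSmem).1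
    have hSlow : n - 1 ≤ 3 * (R.card + ∑ c ∈ S, (TBS.D pa c).card) := (mem_filter.mp hSmem).2
    have hShigh : 3 * (R.card + ∑ c ∈ S, (TBS.D pa c).card) ≤ 2*(n-1) := by
      rcases S.eq_empty_or_nonempty with rfl | ⟨c, hcS⟩
      · simp only [sum_empty, add_zero]
        rw [hRcard]; omega
      · have hlt : (S.erase c).card < S.card := card_erase_lt_of_mem hcS
        have hnot : ¬ (n - 1 ≤ 3 * (R.card + ∑ x ∈ S.erase c, (TBS.D pa x).card)) := by
          intro hcon
          have hmem : S.erase c ∈ SS := by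
            rw [hSS, mem_filter, mem_powerset]
            exact ⟨(erase_subset _ _).trans hSsub, hcon⟩
          have := hSmin _ hmem
          omega
        have hsplit : ∑ x ∈ S, (TBS.D pa x).card
            = (TBS.D pa c).card + ∑ x ∈ S.erase c, (TBS.D pa x).card :=
          (Finset.add_sum_erase S _ hcS).symm
        have hcsmall : 3 * (TBS.D pa c).card < n - 1 := hbig c (hSsub hcS)
        omega
    have hBsub : S.biUnion (TBS.D pa) ⊆ TBS.D pa v := by
      intro u hu'
      obtain ⟨c, hcS, hcu⟩ := mem_biUnion.mp hu'
      exact TBS.D_child_subset pa hp hu (hchildC c (hSsub hcS)) hcu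
    have hdisjRB : Disjoint R (S.biUnion (TBS.D pa)) := by
      rw [Finset.disjoint_left]
      intro u huR huB
      rw [hR, mem_sdiff] at huR
      exact huR.2 (hBsub huB)
    have hKcard : (R ∪ S.biUnion (TBS.D pa)).card
        = R.card + ∑ c ∈ S, (TBS.D pa c).card := by
      rw [card_union_of_disjoint hdisjRB,
        card_biUnion (fun c hc c' hc' hne => hdisjC c (hSsub hc) c' (hSsub hc') hne)]
    apply finish (R ∪ S.biUnion (TBS.D pa))
    · intro u hu'
      rw [mem_sdiff, mem_singleton]
      refine ⟨mem_univ _, ?_⟩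
      rintro rfl
      rcases mem_union.mp hu' with h | h
      · rw [hR, mem_sdiff] at h
        exact h.2 (TBS.self_mem_D pa u)
      · obtain ⟨c, hcS, hcu⟩ := mem_biUnion.mp h
        exact TBS.v_not_mem_D_child pa hp hu (hchildC c (hSsub hcS)) hcu
    · intro a ha b hbv hadj
      rcases mem_union.mp ha with h | h
      · apply mem_union_left
        rw [hR, mem_sdiff] at h ⊢
        exact ⟨mem_univ _, TBS.adj_closed_R pa hp hu hT h.2 hadj hbv⟩
      · obtain ⟨c, hcS, hcu⟩ := mem_biUnion.mp h
        apply mem_union_right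
        exact mem_biUnion.mpr ⟨c, hcS,
          TBS.adj_closed_D_child pa hp hu hT (hchildC c (hSsub hcS)) hadj hbv hcu⟩
    · rw [hKcard]; exact hSlow
    · rw [hKcard]; exact hShigh
end

section
/- Let m ≥ 1 and let G be a graph that does not contain the fan F_m as a subgraph. Then for every vertex v of G there exist disjoint sets X, Y ⊆ N(v) such that |X| ≥ d(v) − 3m + 3, |Y| ≤ 3m − 3, |X| + |Y| ≥ d(v) − m + 1, and no vertex of X is adjacent in G to any vertex of X ∪ Y other than itself (in particular X is an independent set and there are no edges of G between X and Y). -/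
open Finset

/-- `Contains G H` means `G` contains a subgraph isomorphic to `H`, i.e. there is an
injective map on vertices preserving adjacency. -/
def Contains {α β : Type*} (G : SimpleGraph α) (H : SimpleGraph β) : Prop :=
  ∃ f : β → α, Function.Injective f ∧ ∀ ⦃u v⦄, H.Adj u v → G.Adj (f u) (f v)

/-- The fan `F_m = K_1 + mK_2`: a center vertex joined to `m` disjoint edges,
so `m` triangles sharing exactly one common vertex; it has `2m + 1` vertices. -/
def fan (m : ℕ) : SimpleGraph (Unit ⊕ Fin m × Bool) :=
  SimpleGraph.fromRel (fun x y =>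
    (∃ u, x = Sum.inl u) ∨ ∃ i : Fin m, x = Sum.inr (i, true) ∧ y = Sum.inr (i, false))

def IsMatch {V : Type*} (G : SimpleGraph V) (v : V) (M : Finset (V × V)) : Prop :=
  (∀ p ∈ M, G.Adj v p.1 ∧ G.Adj v p.2 ∧ G.Adj p.1 p.2) ∧
  ∀ p ∈ M, ∀ q ∈ M, p ≠ q → p.1 ≠ q.1 ∧ p.1 ≠ q.2 ∧ p.2 ≠ q.1 ∧ p.2 ≠ q.2

lemma contains_fan_of_match {V : Type*} [DecidableEq V] {G : SimpleGraph V} {v : V}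
    {m : ℕ} {M : Finset (V × V)} (hM : IsMatch G v M) (hcard : M.card = m) :
    Contains G (fan m) := by
  classical
  set g : Fin m → V × V := fun i => (M.equivFin.symm (Fin.cast hcard.symm i) : V × V) with hg
  have hgmem : ∀ i, g i ∈ M := fun i => (M.equivFin.symm (Fin.cast hcard.symm i)).2
  have hginj : Function.Injective g := by
    intro i j hij
    have : M.equivFin.symm (Fin.cast hcard.symm i) = M.equivFin.symm (Fin.cast hcard.symm j) :=
      Subtype.ext hij
    have h2 := M.equivFin.symm.injective this
    exact Fin.ext (by simpa using congrArg Fin.val h2)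
  have hadjv1 : ∀ i, G.Adj v (g i).1 := fun i => (hM.1 _ (hgmem i)).1
  have hadjv2 : ∀ i, G.Adj v (g i).2 := fun i => (hM.1 _ (hgmem i)).2.1
  have hadj12 : ∀ i, G.Adj (g i).1 (g i).2 := fun i => (hM.1 _ (hgmem i)).2.2
  have hdist : ∀ i j : Fin m, i ≠ j →
      (g i).1 ≠ (g j).1 ∧ (g i).1 ≠ (g j).2 ∧ (g i).2 ≠ (g j).1 ∧ (g i).2 ≠ (g j).2 :=
    fun i j hij => hM.2 _ (hgmem i) _ (hgmem j) (fun h => hij (hginj h))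
  refine ⟨Sum.elim (fun _ => v) (fun ib => if ib.2 then (g ib.1).1 else (g ib.1).2), ?_, ?_⟩
  · intro x y hxy
    rcases x with x | ⟨i, b⟩ <;> rcases y with y | ⟨j, c⟩
    · rfl
    · exfalso
      simp only [Sum.elim_inl, Sum.elim_inr] at hxy
      rcases c with _ | _ <;> simp at hxy
      · exact (hadjv2 j).ne hxy
      · exact (hadjv1 j).ne hxy
    · exfalso
      simp only [Sum.elim_inl, Sum.elim_inr] at hxy
      rcases b with _ | _ <;> simp at hxy
      · exact (hadjv2 i).ne hxy.symm
      · exact (hadjv1 i).ne hxy.symm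
    · simp only [Sum.elim_inr] at hxy
      have hij : i = j := by
        by_contra hij
        obtain ⟨h1, h2, h3, h4⟩ := hdist i j hij
        rcases b with _ | _ <;> rcases c with _ | _ <;> simp at hxy <;> tauto
      subst hij
      have hbc : b = c := by
        by_contra hbc
        rcases b with _ | _ <;> rcases c with _ | _ <;> simp at hxy hbc
        · exact (hadj12 i).ne hxy.symm
        · exact (hadj12 i).ne hxy
      rw [hbc]
  · intro u w h
    rw [fan, SimpleGraph.fromRel_adj] at h
    obtain ⟨hne, h | h⟩ := h
    · rcases h with ⟨t, rfl⟩ | ⟨i, rfl, rfl⟩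
      · rcases w with w | ⟨j, c⟩
        · simp at hne
        · rcases c with _ | _ <;> simp [hadjv1, hadjv2]
      · simp [hadj12 i]
    · rcases h with ⟨t, rfl⟩ | ⟨i, rfl, rfl⟩
      · rcases u with u | ⟨j, c⟩
        · simp at hne
        · rcases c with _ | _ <;> simp [(hadjv1 _).symm, (hadjv2 _).symm]
      · simp [(hadj12 i).symm]

/-- If `G` contains no fan `F_m`, then for every vertex `v` there are disjoint sets
`X, Y ⊆ N(v)` with `|X| ≥ d(v) - 3m + 3`, `|Y| ≤ 3m - 3`, `|X| + |Y| ≥ d(v) - m + 1`,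
and no vertex of `X` adjacent in `G` to any vertex of `X ∪ Y` (other than itself). -/
theorem no_fan_neighborhood_XY {V : Type*} [Fintype V] [DecidableEq V]
    (m : ℕ) (hm : 1 ≤ m)
    (G : SimpleGraph V) [DecidableRel G.Adj] (hG : ¬ Contains G (fan m)) (v : V) :
    ∃ X Y : Finset V, Disjoint X Y ∧
      (X : Set V) ⊆ G.neighborSet v ∧ (Y : Set V) ⊆ G.neighborSet v ∧
      (G.degree v : ℤ) - 3 * m + 3 ≤ X.card ∧
      Y.card ≤ 3 * m - 3 ∧
      (G.degree v : ℤ) - m + 1 ≤ X.card + Y.card ∧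
      (∀ x ∈ X, ∀ z ∈ X ∪ Y, ¬ G.Adj x z) := by
  classical
  -- a maximum matching in the neighborhood of v
  obtain ⟨M, hMmem, hmax⟩ := Finset.exists_max_image
    ((Finset.univ : Finset (Finset (V × V))).filter (fun M => IsMatch G v M))
    Finset.card ⟨∅, by simp [IsMatch]⟩
  rw [Finset.mem_filter] at hMmem
  have hM : IsMatch G v M := hMmem.2
  have hmax' : ∀ M', IsMatch G v M' → M'.card ≤ M.card := by
    intro M' h'
    exact hmax M' (Finset.mem_filter.mpr ⟨Finset.mem_univ _, h'⟩)
  -- the matching has size < m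
  have hMm : M.card < m := by
    by_contra h
    push_neg at h
    obtain ⟨M', hsub, hcard⟩ := Finset.exists_subset_card_eq h
    exact hG (contains_fan_of_match
      ⟨fun p hp => hM.1 p (hsub hp), fun p hp q hq => hM.2 p (hsub hp) q (hsub hq)⟩ hcard)
  set E : Finset V := M.image Prod.fst ∪ M.image Prod.snd with hE
  set U : Finset V := G.neighborFinset v \ E with hU
  have hUnbr : U ⊆ G.neighborFinset v := Finset.sdiff_subset
  have hUadj : ∀ u ∈ U, G.Adj v u := fun u hu => by
    simpa using (SimpleGraph.mem_neighborFinset G v u).mp (hUnbr hu)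
  have hUnotend : ∀ u ∈ U, ∀ p ∈ M, u ≠ p.1 ∧ u ≠ p.2 := by
    intro u hu p hp
    have h2 := (Finset.mem_sdiff.mp hu).2
    constructor <;> rintro rfl <;> apply h2 <;> rw [hE]
    · exact Finset.mem_union_left _ (Finset.mem_image.mpr ⟨p, hp, rfl⟩)
    · exact Finset.mem_union_right _ (Finset.mem_image.mpr ⟨p, hp, rfl⟩)
  -- U is independent
  have hUindep : ∀ u1 ∈ U, ∀ u2 ∈ U, ¬ G.Adj u1 u2 := by
    intro u1 hu1 u2 hu2 hadj
    have hne : u1 ≠ u2 := hadj.ne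
    have hnotmem : (u1, u2) ∉ M := fun h => (hUnotend u1 hu1 _ h).1 rfl
    have hM' : IsMatch G v (insert (u1, u2) M) := by
      constructor
      · intro p hp
        rcases Finset.mem_insert.mp hp with rfl | hp
        · exact ⟨hUadj u1 hu1, hUadj u2 hu2, hadj⟩
        · exact hM.1 p hp
      · intro p hp q hq hpq
        rcases Finset.mem_insert.mp hp with rfl | hp <;>
          rcases Finset.mem_insert.mp hq with rfl | hq
        · exact absurd rfl hpq
        · exact ⟨(hUnotend u1 hu1 q hq).1, (hUnotend u1 hu1 q hq).2,
            (hUnotend u2 hu2 q hq).1, (hUnotend u2 hu2 q hq).2⟩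
        · exact ⟨((hUnotend u1 hu1 p hp).1).symm, ((hUnotend u2 hu2 p hp).1).symm,
            ((hUnotend u1 hu1 p hp).2).symm, ((hUnotend u2 hu2 p hp).2).symm⟩
        · exact hM.2 p hp q hq hpq
    have := hmax' _ hM'
    rw [Finset.card_insert_of_notMem hnotmem] at this
    omega
  -- no augmenting structure: distinct u1 u2 in U adjacent to the two ends of an edge
  have key2 : ∀ p ∈ M, ∀ u1 ∈ U, ∀ u2 ∈ U, u1 ≠ u2 →
      G.Adj u1 p.1 → G.Adj u2 p.2 → False := by
    intro p hp u1 hu1 u2 hu2 hne h1 h2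
    have hu1p := hUnotend u1 hu1 p hp
    have hu2p := hUnotend u2 hu2 p hp
    have hp12 : p.1 ≠ p.2 := (hM.1 p hp).2.2.ne
    have hold : ∀ q ∈ M.erase p, u1 ≠ q.1 ∧ u1 ≠ q.2 ∧ u2 ≠ q.1 ∧ u2 ≠ q.2 ∧
        p.1 ≠ q.1 ∧ p.1 ≠ q.2 ∧ p.2 ≠ q.1 ∧ p.2 ≠ q.2 := by
      intro q hq
      obtain ⟨hqp, hqM⟩ := Finset.mem_erase.mp hq
      have hd := hM.2 p hp q hqM (Ne.symm hqp)
      exact ⟨(hUnotend u1 hu1 q hqM).1, (hUnotend u1 hu1 q hqM).2,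
        (hUnotend u2 hu2 q hqM).1, (hUnotend u2 hu2 q hqM).2, hd.1, hd.2.1, hd.2.2.1, hd.2.2.2⟩
    set M' : Finset (V × V) := insert (u1, p.1) (insert (p.2, u2) (M.erase p)) with hM'def
    have hn1 : (p.2, u2) ∉ M.erase p := by
      intro h
      exact (hold _ h).2.2.2.2.2.2.1 rfl
    have hn2 : (u1, p.1) ∉ insert (p.2, u2) (M.erase p) := by
      intro h
      rcases Finset.mem_insert.mp h with h | h
      · exact hu1p.2 (congrArg Prod.fst h)
      · exact (hold _ h).1 rfl
    have hM' : IsMatch G v M' := by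
      constructor
      · intro q hq
        rcases Finset.mem_insert.mp hq with rfl | hq
        · exact ⟨hUadj u1 hu1, (hM.1 p hp).1, h1⟩
        rcases Finset.mem_insert.mp hq with rfl | hq
        · exact ⟨(hM.1 p hp).2.1, hUadj u2 hu2, h2.symm⟩
        · exact hM.1 q (Finset.mem_of_mem_erase hq)
      · intro q hq r hr hqr
        have hnewnew : (u1 : V) ≠ p.2 ∧ u1 ≠ u2 ∧ p.1 ≠ p.2 ∧ p.1 ≠ u2 :=
          ⟨hu1p.2, hne, hp12, fun h => hu2p.1 h.symm⟩
        rcases Finset.mem_insert.mp hq with rfl | hq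
        · rcases Finset.mem_insert.mp hr with rfl | hr
          · exact absurd rfl hqr
          rcases Finset.mem_insert.mp hr with rfl | hr
          · exact hnewnew
          · obtain ⟨a1, a2, a3, a4, b1, b2, b3, b4⟩ := hold _ hr
            exact ⟨a1, a2, b1, b2⟩
        rcases Finset.mem_insert.mp hq with rfl | hq
        · rcases Finset.mem_insert.mp hr with rfl | hr
          · exact ⟨fun h => hnewnew.1 h.symm, fun h => hnewnew.2.2.1 h.symm,
              fun h => hnewnew.2.1 h.symm, fun h => hnewnew.2.2.2 h.symm⟩
          rcases Finset.mem_insert.mp hr with rfl | hr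
          · exact absurd rfl hqr
          · obtain ⟨a1, a2, a3, a4, b1, b2, b3, b4⟩ := hold _ hr
            exact ⟨b3, b4, a3, a4⟩
        · rcases Finset.mem_insert.mp hr with rfl | hr
          · obtain ⟨a1, a2, a3, a4, b1, b2, b3, b4⟩ := hold _ hq
            exact ⟨Ne.symm a1, Ne.symm b1, Ne.symm a2, Ne.symm b2⟩
          rcases Finset.mem_insert.mp hr with rfl | hr
          · obtain ⟨a1, a2, a3, a4, b1, b2, b3, b4⟩ := hold _ hq
            exact ⟨Ne.symm b3, Ne.symm a3, Ne.symm b4, Ne.symm a4⟩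
          · exact hM.2 q (Finset.mem_of_mem_erase hq) r (Finset.mem_of_mem_erase hr) hqr
    have hc := hmax' _ hM'
    rw [hM'def] at hc
    rw [Finset.card_insert_of_notMem hn2, Finset.card_insert_of_notMem hn1,
      Finset.card_erase_of_mem hp] at hc
    have hMpos : 1 ≤ M.card := Finset.card_pos.mpr ⟨p, hp⟩
    omega
  -- classification of matching edges
  set A : V × V → Finset V := fun p => U.filter (fun u => G.Adj u p.1) with hA
  set B : V × V → Finset V := fun p => U.filter (fun u => G.Adj u p.2) with hB
  set S : V × V → Finset V := fun p => A p ∪ B p with hS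
  have hSsubU : ∀ p, S p ⊆ U := fun p =>
    Finset.union_subset (Finset.filter_subset _ _) (Finset.filter_subset _ _)
  have hABeq : ∀ p ∈ M, ∀ a ∈ A p, ∀ b ∈ B p, a = b := by
    intro p hp a ha b hb
    by_contra hab
    exact key2 p hp a (Finset.filter_subset _ _ ha) b (Finset.filter_subset _ _ hb) hab
      (Finset.mem_filter.mp ha).2 (Finset.mem_filter.mp hb).2
  have hSone : ∀ p ∈ M, (A p).Nonempty → (B p).Nonempty → (S p).card ≤ 1 := by
    intro p hp hAne hBne
    obtain ⟨a, ha⟩ := hAne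
    obtain ⟨b, hb⟩ := hBne
    have : S p ⊆ {b} := by
      intro x hx
      rcases Finset.mem_union.mp hx with hx | hx
      · exact Finset.mem_singleton.mpr (hABeq p hp x hx b hb)
      · rw [Finset.mem_singleton, ← hABeq p hp a ha x hx, hABeq p hp a ha b hb]
    exact le_trans (Finset.card_le_card this) (by simp)
  set Yp : V × V → Finset V := fun p =>
    if (S p).card ≤ 1 then insert p.1 (insert p.2 (S p))
    else if B p = ∅ then {p.2} else {p.1} with hYp
  set Dp : V × V → Finset V := fun p =>
    if (S p).card ≤ 1 then ∅ else if B p = ∅ then {p.1} else {p.2} with hDp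
  set Y : Finset V := M.biUnion Yp with hY
  set X : Finset V := U \ Y with hX
  have hXU : X ⊆ U := Finset.sdiff_subset
  -- membership facts
  have hYpsub : ∀ p ∈ M, Yp p ⊆ G.neighborFinset v := by
    intro p hp x hx
    simp only [hYp] at hx
    have h1 : p.1 ∈ G.neighborFinset v := (SimpleGraph.mem_neighborFinset G v p.1).mpr (hM.1 p hp).1
    have h2 : p.2 ∈ G.neighborFinset v := (SimpleGraph.mem_neighborFinset G v p.2).mpr (hM.1 p hp).2.1
    split_ifs at hx with hc1 hc2
    · rcases Finset.mem_insert.mp hx with rfl | hx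
      · exact h1
      rcases Finset.mem_insert.mp hx with rfl | hx
      · exact h2
      · exact hUnbr (hSsubU p hx)
    · rw [Finset.mem_singleton] at hx; subst hx; exact h2
    · rw [Finset.mem_singleton] at hx; subst hx; exact h1
  have hYsub : Y ⊆ G.neighborFinset v := by
    intro x hx
    obtain ⟨p, hp, hxp⟩ := Finset.mem_biUnion.mp hx
    exact hYpsub p hp hxp
  -- Y is small
  have hYcard : Y.card ≤ 3 * M.card := by
    have h1 : ∀ p ∈ M, (Yp p).card ≤ 3 := by
      intro p hp
      simp only [hYp]
      split_ifs with hc1 hc2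
      · calc (insert p.1 (insert p.2 (S p))).card
            ≤ (insert p.2 (S p)).card + 1 := Finset.card_insert_le _ _
          _ ≤ (S p).card + 1 + 1 := by
              have := Finset.card_insert_le p.2 (S p); omega
          _ ≤ 3 := by omega
      · simp
      · simp
    calc Y.card ≤ ∑ p ∈ M, (Yp p).card := Finset.card_biUnion_le
      _ ≤ ∑ p ∈ M, 3 := Finset.sum_le_sum h1
      _ = 3 * M.card := by rw [Finset.sum_const, smul_eq_mul, mul_comm]
  -- at most one vertex of U enters Y per matching edge
  have hYUcard : (Y ∩ U).card ≤ M.card := by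
    have hsub : Y ∩ U ⊆ M.biUnion (fun p => Yp p ∩ U) := by
      intro x hx
      obtain ⟨hxY, hxU⟩ := Finset.mem_inter.mp hx
      obtain ⟨p, hp, hxp⟩ := Finset.mem_biUnion.mp hxY
      exact Finset.mem_biUnion.mpr ⟨p, hp, Finset.mem_inter.mpr ⟨hxp, hxU⟩⟩
    have h1 : ∀ p ∈ M, (Yp p ∩ U).card ≤ 1 := by
      intro p hp
      simp only [hYp]
      split_ifs with hc1 hc2
      · have : insert p.1 (insert p.2 (S p)) ∩ U ⊆ S p := by
          intro x hx
          obtain ⟨hx1, hx2⟩ := Finset.mem_inter.mp hx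
          rcases Finset.mem_insert.mp hx1 with rfl | hx1
          · exact absurd rfl (hUnotend _ hx2 p hp).1
          rcases Finset.mem_insert.mp hx1 with rfl | hx1
          · exact absurd rfl (hUnotend _ hx2 p hp).2
          · exact hx1
        exact le_trans (Finset.card_le_card this) hc1
      · refine le_trans (Finset.card_le_card (Finset.inter_subset_left)) (by simp)
      · refine le_trans (Finset.card_le_card (Finset.inter_subset_left)) (by simp)
    calc (Y ∩ U).card ≤ (M.biUnion (fun p => Yp p ∩ U)).card := Finset.card_le_card hsub
      _ ≤ ∑ p ∈ M, (Yp p ∩ U).card := Finset.card_biUnion_le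
      _ ≤ ∑ p ∈ M, 1 := Finset.sum_le_sum h1
      _ = M.card := by simp
  -- size of U
  have hEcard : E.card ≤ 2 * M.card := by
    calc E.card ≤ (M.image Prod.fst).card + (M.image Prod.snd).card := Finset.card_union_le _ _
      _ ≤ M.card + M.card := Nat.add_le_add (Finset.card_image_le) (Finset.card_image_le)
      _ = 2 * M.card := by omega
  have hUcard : G.degree v ≤ U.card + 2 * M.card := by
    have h1 : U.card + E.card = (G.neighborFinset v).card + (E \ G.neighborFinset v).card := by
      rw [hU]; rw [Finset.card_sdiff_add_card]
      rw [Finset.union_comm, ← Finset.card_sdiff_add_card]; omega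
    have := G.card_neighborFinset_eq_degree v
    omega
  -- the deleted set D
  set D : Finset V := M.biUnion Dp with hD
  have hDcard : D.card ≤ M.card := by
    have h1 : ∀ p ∈ M, (Dp p).card ≤ 1 := by
      intro p hp
      simp only [hDp]
      split_ifs <;> simp
    calc D.card ≤ ∑ p ∈ M, (Dp p).card := Finset.card_biUnion_le
      _ ≤ ∑ p ∈ M, 1 := Finset.sum_le_sum h1
      _ = M.card := by simp
  -- coverage: every neighbor is in X ∪ Y ∪ D
  have hcover : G.neighborFinset v ⊆ X ∪ Y ∪ D := by
    intro w hw
    by_cases hwU : w ∈ U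
    · by_cases hwY : w ∈ Y
      · exact Finset.mem_union_left _ (Finset.mem_union_right _ hwY)
      · exact Finset.mem_union_left _ (Finset.mem_union_left _
          (Finset.mem_sdiff.mpr ⟨hwU, hwY⟩))
    · have hwE : w ∈ E := by
        rw [hU] at hwU
        by_contra h
        exact hwU (Finset.mem_sdiff.mpr ⟨hw, h⟩)
      have : ∃ p ∈ M, w = p.1 ∨ w = p.2 := by
        rw [hE] at hwE
        rcases Finset.mem_union.mp hwE with h | h <;>
          obtain ⟨p, hp, rfl⟩ := Finset.mem_image.mp h
        · exact ⟨p, hp, Or.inl rfl⟩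
        · exact ⟨p, hp, Or.inr rfl⟩
      obtain ⟨p, hp, hw12⟩ := this
      have hYD : w ∈ Yp p ∪ Dp p := by
        simp only [hYp, hDp]
        split_ifs with hc1 hc2
        · rcases hw12 with rfl | rfl
          · exact Finset.mem_union_left _ (Finset.mem_insert_self _ _)
          · exact Finset.mem_union_left _
              (Finset.mem_insert_of_mem (Finset.mem_insert_self _ _))
        · rcases hw12 with rfl | rfl
          · exact Finset.mem_union_right _ (Finset.mem_singleton_self _)
          · exact Finset.mem_union_left _ (Finset.mem_singleton_self _)
        · rcases hw12 with rfl | rfl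
          · exact Finset.mem_union_left _ (Finset.mem_singleton_self _)
          · exact Finset.mem_union_right _ (Finset.mem_singleton_self _)
      rcases Finset.mem_union.mp hYD with h | h
      · exact Finset.mem_union_left _ (Finset.mem_union_right _
          (Finset.mem_biUnion.mpr ⟨p, hp, h⟩))
      · exact Finset.mem_union_right _ (Finset.mem_biUnion.mpr ⟨p, hp, h⟩)
  have hcoverc : G.degree v ≤ X.card + Y.card + D.card := by
    have h1 := Finset.card_le_card hcover
    have h2 : (X ∪ Y ∪ D).card ≤ X.card + Y.card + D.card :=
      le_trans (Finset.card_union_le _ _) (by have := Finset.card_union_le X Y; omega)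
    have := G.card_neighborFinset_eq_degree v
    omega
  -- size of X
  have hXcard : U.card ≤ X.card + (Y ∩ U).card := by
    have : U ⊆ X ∪ (Y ∩ U) := by
      intro u hu
      by_cases huY : u ∈ Y
      · exact Finset.mem_union_right _ (Finset.mem_inter.mpr ⟨huY, hu⟩)
      · exact Finset.mem_union_left _ (Finset.mem_sdiff.mpr ⟨hu, huY⟩)
    exact le_trans (Finset.card_le_card this) (Finset.card_union_le _ _)
  -- the adjacency property
  have hadjprop : ∀ x ∈ X, ∀ z ∈ X ∪ Y, ¬ G.Adj x z := by
    intro x hx z hz hadj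
    obtain ⟨hxU, hxY⟩ := Finset.mem_sdiff.mp hx
    rcases Finset.mem_union.mp hz with hzX | hzY
    · exact hUindep x hxU z (hXU hzX) hadj
    · obtain ⟨p, hp, hzp⟩ := Finset.mem_biUnion.mp hzY
      simp only [hYp] at hzp
      split_ifs at hzp with hc1 hc2
      · rcases Finset.mem_insert.mp hzp with rfl | hzp
        · -- z = p.1, so x ∈ A p ⊆ S p ⊆ Yp p ⊆ Y
          have hxA : x ∈ A p := Finset.mem_filter.mpr ⟨hxU, hadj⟩
          have hxS : x ∈ S p := Finset.mem_union_left _ hxA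
          apply hxY
          refine Finset.mem_biUnion.mpr ⟨p, hp, ?_⟩
          simp only [hYp]
          rw [if_pos hc1]
          exact Finset.mem_insert_of_mem (Finset.mem_insert_of_mem hxS)
        rcases Finset.mem_insert.mp hzp with rfl | hzp
        · have hxB : x ∈ B p := Finset.mem_filter.mpr ⟨hxU, hadj⟩
          have hxS : x ∈ S p := Finset.mem_union_right _ hxB
          apply hxY
          refine Finset.mem_biUnion.mpr ⟨p, hp, ?_⟩
          simp only [hYp]
          rw [if_pos hc1]
          exact Finset.mem_insert_of_mem (Finset.mem_insert_of_mem hxS)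
        · exact hUindep x hxU z (hSsubU p hzp) hadj
      · rw [Finset.mem_singleton] at hzp; subst hzp
        have hxB : x ∈ B p := Finset.mem_filter.mpr ⟨hxU, hadj⟩
        rw [hc2] at hxB
        exact absurd hxB (Finset.notMem_empty x)
      · rw [Finset.mem_singleton] at hzp; subst hzp
        have hxA : x ∈ A p := Finset.mem_filter.mpr ⟨hxU, hadj⟩
        have hAempty : A p = ∅ := by
          by_contra hA
          exact hc1 (hSone p hp (Finset.nonempty_iff_ne_empty.mpr hA)
            (Finset.nonempty_iff_ne_empty.mpr hc2))
        rw [hAempty] at hxA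
        exact absurd hxA (Finset.notMem_empty x)
  -- wrap up
  refine ⟨X, Y, Finset.sdiff_disjoint, ?_, ?_, ?_, ?_, ?_, hadjprop⟩
  · intro x hx
    have := hUnbr (hXU (by simpa using hx))
    simpa using this
  · intro x hx
    have := hYsub (by simpa using hx)
    simpa using this
  · omega
  · omega
  · omega
end

section
/- Let m ≥ 9 and n ≥ m² − m + 1. Let T be a tree on n vertices. Let G be a graph and let X, Y be disjoint subsets of V(G) with |X ∪ Y| = n − m + 1 and |Y| ≤ 3m − 3 such that, in the complement Ḡ, every vertex of X is adjacent to every vertex of X ∪ Y other than itself. Let H ⊆ V(T) satisfy |V(T)| − |H| ≤ n − m + 1, let w_1, …, w_k be distinct vertices of V(T) ∖ H and let u_1, …, u_k be distinct vertices of X. If |A(T) ∩ {w_1, …, w_k}| + |A(T) ∩ H| ≤ m + 1, then there is an injective map f : V(T) ∖ H → X ∪ Y with f(w_i) = u_i for all 1 ≤ i ≤ k such that whenever two vertices of V(T) ∖ H are adjacent in T, their images under f are adjacent in Ḡ (i.e., the forest T − H embeds into Ḡ with image inside X ∪ Y). -/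
open Finset

/-- **Claim 3.2**: embedding a forest `T - H` into the complement of `G` inside `X ∪ Y`,
with prescribed images `u i ∈ X` for prescribed vertices `w i`, provided
`|A(T) ∩ {w_1, …, w_k}| + |A(T) ∩ H| ≤ m + 1`. -/
theorem embed_forest_in_XY {VT VG : Type*} [Fintype VT] [Fintype VG]
    [DecidableEq VT] [DecidableEq VG]
    (m n : ℕ) (hm : 9 ≤ m) (hn : m ^ 2 - m + 1 ≤ n)
    (T : SimpleGraph VT) (hT : T.IsTree) (hTcard : Fintype.card VT = n)
    -- `A` is the larger part of the (unique) bipartition of `T`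
    (A : Finset VT)
    (hA1 : ∀ u ∈ A, ∀ v ∈ A, ¬ T.Adj u v)
    (hA2 : ∀ u ∉ A, ∀ v ∉ A, ¬ T.Adj u v)
    (hA3 : Fintype.card VT ≤ 2 * A.card)
    (G : SimpleGraph VG) (X Y : Finset VG) (hXY : Disjoint X Y)
    (hXYcard : (X ∪ Y).card = n - m + 1) (hYcard : Y.card ≤ 3 * m - 3)
    (hXadj : ∀ x ∈ X, ∀ z ∈ X ∪ Y, z ≠ x → Gᶜ.Adj x z)
    (H : Finset VT) (hH : Fintype.card VT - H.card ≤ n - m + 1)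
    (k : ℕ) (w : Fin k → VT) (hwinj : Function.Injective w) (hwH : ∀ i, w i ∉ H)
    (u : Fin k → VG) (huinj : Function.Injective u) (huX : ∀ i, u i ∈ X)
    (hcount : (A ∩ univ.image w).card + (A ∩ H).card ≤ m + 1) :
    ∃ f : VT → VG, Set.InjOn f {v | v ∉ H} ∧
      (∀ v ∉ H, f v ∈ X ∪ Y) ∧
      (∀ i, f (w i) = u i) ∧
      (∀ a ∉ H, ∀ b ∉ H, T.Adj a b → Gᶜ.Adj (f a) (f b)) := by
  classical
  set W : Finset VT := univ.image w with hW
  set B' : Finset VT := ((univ \ A) \ H) \ W with hB'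
  set A' : Finset VT := (A \ H) \ W with hA'
  set Uimg : Finset VG := univ.image u with hU
  -- basic cardinalities
  have hWcard : W.card = k := by
    rw [hW, Finset.card_image_of_injective _ hwinj, Finset.card_univ, Fintype.card_fin]
  have hUcard : Uimg.card = k := by
    rw [hU, Finset.card_image_of_injective _ huinj, Finset.card_univ, Fintype.card_fin]
  have hUX : Uimg ⊆ X := by
    intro x hx; rw [hU, Finset.mem_image] at hx
    obtain ⟨i, -, rfl⟩ := hx; exact huX i
  have hWH : ∀ v ∈ W, v ∉ H := by
    intro v hv; rw [hW, Finset.mem_image] at hv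
    obtain ⟨i, -, rfl⟩ := hv; exact hwH i
  have hkX : k ≤ X.card := hUcard ▸ Finset.card_le_card hUX
  -- arithmetic facts
  have hmm : 9 * m ≤ m * m := Nat.mul_le_mul_right m hm
  have hn' : m * m - m + 1 ≤ n := by
    have : m ^ 2 = m * m := by ring
    rwa [this] at hn
  have hXcards : X.card + Y.card = n - m + 1 := by
    rw [← Finset.card_union_of_disjoint hXY]; exact hXYcard
  have hHle : H.card ≤ Fintype.card VT := by
    simpa [Finset.card_univ] using Finset.card_le_univ H
  -- counting identities
  have e1eq : (univ \ A).card + A.card = Fintype.card VT := by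
    have h := Finset.card_sdiff_add_card_inter (univ : Finset VT) A
    rwa [Finset.univ_inter, Finset.card_univ] at h
  have c_BH := Finset.card_sdiff_add_card_inter (univ \ A) H
  have c_B' := Finset.card_sdiff_add_card_inter ((univ \ A) \ H) W
  have eqs1 : (univ \ A) ∩ H = H \ A := by
    ext v
    simp only [Finset.mem_inter, Finset.mem_sdiff, Finset.mem_univ, true_and]
    tauto
  have eqs2 : ((univ \ A) \ H) ∩ W = W \ A := by
    ext v
    simp only [Finset.mem_inter, Finset.mem_sdiff, Finset.mem_univ, true_and]
    exact ⟨fun h => ⟨h.2, h.1.1⟩, fun h => ⟨⟨h.2, hWH v h.1⟩, h.1⟩⟩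
  rw [eqs1] at c_BH
  rw [eqs2] at c_B'
  have c_W := Finset.card_sdiff_add_card_inter W A
  have c_H := Finset.card_sdiff_add_card_inter H A
  have c_A' := Finset.card_sdiff_add_card_inter (A \ H) W
  have c_AH := Finset.card_sdiff_add_card_inter A H
  have eqs3 : (A \ H) ∩ W = W ∩ A := by
    ext v
    simp only [Finset.mem_inter, Finset.mem_sdiff]
    exact ⟨fun h => ⟨h.2, h.1.1⟩, fun h => ⟨⟨h.2, hWH v h.1⟩, h.1⟩⟩
  rw [eqs3] at c_A'
  have hc : (W ∩ A).card + (H ∩ A).card ≤ m + 1 := by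
    rw [Finset.inter_comm W A, Finset.inter_comm H A]; exact hcount
  have hB'c : B'.card = (((univ \ A) \ H) \ W).card := rfl
  have hA'c : A'.card = ((A \ H) \ W).card := rfl
  have hAHcomm : (A ∩ H).card = (H ∩ A).card := by rw [Finset.inter_comm]
  -- the first key inequality
  have hineq1 : B'.card + k ≤ X.card := by omega
  have hXUcard : (X \ Uimg).card = X.card - k := by
    rw [Finset.card_sdiff_of_subset hUX, hUcard]
  have hineq1' : B'.card ≤ (X \ Uimg).card := by omega
  -- a default element
  have hj0 : (X ∪ Y).Nonempty := by
    rw [← Finset.card_pos, hXYcard]; omega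
  obtain ⟨j0, hj0⟩ := hj0
  -- first embedding
  have hg1 : ∃ g1 : VT → VG, Set.InjOn g1 ↑B' ∧ ∀ v ∈ B', g1 v ∈ X \ Uimg := by
    obtain ⟨e1⟩ := Function.Embedding.nonempty_of_card_le
      (α := ↥B') (β := ↥(X \ Uimg))
      (by simp only [Fintype.card_coe]; exact hineq1')
    set g : VT → VG := fun v => if hv : v ∈ B' then (e1 ⟨v, hv⟩ : VG) else j0 with hgdef
    have hgv : ∀ v (hv : v ∈ B'), g v = (e1 ⟨v, hv⟩ : VG) := fun v hv => dif_pos hv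
    refine ⟨g, ?_, ?_⟩
    · intro a ha b hb hab
      rw [Finset.mem_coe] at ha hb
      rw [hgv a ha, hgv b hb] at hab
      exact congrArg Subtype.val (e1.injective (Subtype.ext hab))
    · intro v hv
      rw [hgv v hv]
      exact (e1 ⟨v, hv⟩).2
  obtain ⟨g1, hg1inj, hg1mem⟩ := hg1
  set Z : Finset VG := ((X ∪ Y) \ Uimg) \ B'.image g1 with hZ
  -- the second key inequality
  have hZ1 : (X ∪ Y).card - Uimg.card ≤ ((X ∪ Y) \ Uimg).card :=
    Finset.le_card_sdiff _ _
  have hZ2 : ((X ∪ Y) \ Uimg).card - (B'.image g1).card ≤ Z.card :=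
    Finset.le_card_sdiff _ _
  have hg1card : (B'.image g1).card ≤ B'.card := Finset.card_image_le
  have hineq2 : A'.card ≤ Z.card := by omega
  -- second embedding
  have hg2 : ∃ g2 : VT → VG, Set.InjOn g2 ↑A' ∧ ∀ v ∈ A', g2 v ∈ Z := by
    obtain ⟨e2⟩ := Function.Embedding.nonempty_of_card_le
      (α := ↥A') (β := ↥Z)
      (by simp only [Fintype.card_coe]; exact hineq2)
    set g : VT → VG := fun v => if hv : v ∈ A' then (e2 ⟨v, hv⟩ : VG) else j0 with hgdef
    have hgv : ∀ v (hv : v ∈ A'), g v = (e2 ⟨v, hv⟩ : VG) := fun v hv => dif_pos hv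
    refine ⟨g, ?_, ?_⟩
    · intro a ha b hb hab
      rw [Finset.mem_coe] at ha hb
      rw [hgv a ha, hgv b hb] at hab
      exact congrArg Subtype.val (e2.injective (Subtype.ext hab))
    · intro v hv
      rw [hgv v hv]
      exact (e2 ⟨v, hv⟩).2
  obtain ⟨g2, hg2inj, hg2mem⟩ := hg2
  -- the embedding map
  set f : VT → VG := fun v => if hv : ∃ i, w i = v then u hv.choose
    else if v ∈ B' then g1 v else if v ∈ A' then g2 v else j0 with hf_def
  have hfv : ∀ v, f v = if hv : ∃ i, w i = v then u hv.choose
      else if v ∈ B' then g1 v else if v ∈ A' then g2 v else j0 := fun v => rfl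
  have hfw : ∀ i, f (w i) = u i := by
    intro i
    have hx : ∃ j, w j = w i := ⟨i, rfl⟩
    rw [hfv, dif_pos hx]
    congr 1
    exact hwinj hx.choose_spec
  have hmemWiff : ∀ v : VT, v ∈ W ↔ ∃ i, w i = v := by
    intro v; rw [hW, Finset.mem_image]; simp
  have hB'nW : ∀ v ∈ B', ¬∃ i, w i = v := by
    intro v hv
    rw [← hmemWiff]
    exact (Finset.mem_sdiff.1 hv).2
  have hA'nW : ∀ v ∈ A', ¬∃ i, w i = v := by
    intro v hv
    rw [← hmemWiff]
    exact (Finset.mem_sdiff.1 hv).2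
  have hA'nB : ∀ v ∈ A', v ∉ B' := by
    intro v hv hvB
    have h1 : v ∈ A := (Finset.mem_sdiff.1 (Finset.mem_sdiff.1 hv).1).1
    have h2 : v ∉ A :=
      (Finset.mem_sdiff.1 (Finset.mem_sdiff.1 (Finset.mem_sdiff.1 hvB).1).1).2
    exact h2 h1
  have hfB' : ∀ v ∈ B', f v = g1 v := by
    intro v hv
    rw [hfv, dif_neg (hB'nW v hv), if_pos hv]
  have hfA' : ∀ v ∈ A', f v = g2 v := by
    intro v hv
    rw [hfv, dif_neg (hA'nW v hv), if_neg (hA'nB v hv), if_pos hv]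
  have htri : ∀ v, v ∉ H → (∃ i, w i = v) ∨ v ∈ B' ∨ v ∈ A' := by
    intro v hv
    by_cases hvW : v ∈ W
    · exact Or.inl ((hmemWiff v).1 hvW)
    by_cases hvA : v ∈ A
    · exact Or.inr (Or.inr (Finset.mem_sdiff.2 ⟨Finset.mem_sdiff.2 ⟨hvA, hv⟩, hvW⟩))
    · exact Or.inr (Or.inl (Finset.mem_sdiff.2
        ⟨Finset.mem_sdiff.2 ⟨Finset.mem_sdiff.2 ⟨Finset.mem_univ v, hvA⟩, hv⟩, hvW⟩))
  have huU : ∀ i, u i ∈ Uimg := by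
    intro i; rw [hU, Finset.mem_image]; exact ⟨i, Finset.mem_univ i, rfl⟩
  have hZnU : ∀ x ∈ Z, x ∉ Uimg := by
    intro x hx
    exact (Finset.mem_sdiff.1 (Finset.mem_sdiff.1 hx).1).2
  have hZnI : ∀ x ∈ Z, x ∉ B'.image g1 := by
    intro x hx
    exact (Finset.mem_sdiff.1 hx).2
  have hfmem : ∀ v ∉ H, f v ∈ X ∪ Y := by
    intro v hv
    rcases htri v hv with ⟨i, rfl⟩ | hvB | hvA
    · rw [hfw i]; exact Finset.mem_union_left _ (huX i)
    · rw [hfB' v hvB]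
      exact Finset.mem_union_left _ (Finset.mem_sdiff.1 (hg1mem v hvB)).1
    · rw [hfA' v hvA]
      exact (Finset.mem_sdiff.1 (Finset.mem_sdiff.1 (hg2mem v hvA)).1).1
  have hInj : Set.InjOn f {v | v ∉ H} := by
    intro a ha b hb hab
    simp only [Set.mem_setOf_eq] at ha hb
    rcases htri a ha with ⟨i, rfl⟩ | haB | haA <;>
      rcases htri b hb with ⟨j, rfl⟩ | hbB | hbA
    · rw [hfw i, hfw j] at hab
      exact congrArg w (huinj hab)
    · rw [hfw i, hfB' b hbB] at hab
      exact absurd (hab ▸ huU i) (Finset.mem_sdiff.1 (hg1mem b hbB)).2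
    · rw [hfw i, hfA' b hbA] at hab
      exact absurd (hab ▸ huU i) (hZnU _ (hg2mem b hbA))
    · rw [hfw j, hfB' a haB] at hab
      exact absurd (hab ▸ huU j) (Finset.mem_sdiff.1 (hg1mem a haB)).2
    · rw [hfB' a haB, hfB' b hbB] at hab
      exact hg1inj (Finset.mem_coe.2 haB) (Finset.mem_coe.2 hbB) hab
    · rw [hfB' a haB, hfA' b hbA] at hab
      have h1 : g1 a ∈ B'.image g1 := Finset.mem_image_of_mem g1 haB
      rw [hab] at h1
      exact absurd h1 (hZnI _ (hg2mem b hbA))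
    · rw [hfw j, hfA' a haA] at hab
      exact absurd (hab ▸ huU j) (hZnU _ (hg2mem a haA))
    · rw [hfA' a haA, hfB' b hbB] at hab
      have h1 : g1 b ∈ B'.image g1 := Finset.mem_image_of_mem g1 hbB
      rw [← hab] at h1
      exact absurd h1 (hZnI _ (hg2mem a haA))
    · rw [hfA' a haA, hfA' b hbA] at hab
      exact hg2inj (Finset.mem_coe.2 haA) (Finset.mem_coe.2 hbA) hab
  have keyX : ∀ p, p ∉ H → p ∉ A → f p ∈ X := by
    intro p hpH hpA
    rcases htri p hpH with ⟨i, rfl⟩ | hpB | hpA'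
    · rw [hfw i]; exact huX i
    · rw [hfB' p hpB]
      exact (Finset.mem_sdiff.1 (hg1mem p hpB)).1
    · exact absurd (Finset.mem_sdiff.1 (Finset.mem_sdiff.1 hpA').1).1 hpA
  refine ⟨f, hInj, hfmem, hfw, ?_⟩
  have main : ∀ p q, p ∉ H → q ∉ H → p ∉ A → T.Adj p q → Gᶜ.Adj (f p) (f q) := by
    intro p q hp hq hpA hadj
    have h1 : f p ∈ X := keyX p hp hpA
    have h2 : f q ∈ X ∪ Y := hfmem q hq
    have h3 : f q ≠ f p := fun h => hadj.ne ((hInj hq hp h).symm)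
    exact hXadj (f p) h1 (f q) h2 h3
  intro a haH b hbH hab
  by_cases haA : a ∈ A
  · have hbA : b ∉ A := fun hbA => hA1 a haA b hbA hab
    exact (main b a hbH haH hbA hab.symm).symm
  · exact main a b haH hbH haA hab
end

section
/- Let T be a tree on n vertices and let G be a graph with |V(G)| ≥ 2n − 1 whose complement Ḡ does not contain T as a subgraph. Suppose S ⊆ V(G) is such that some connected subgraph (subtree) of T with exactly |S| vertices embeds into Ḡ with image exactly S. Then there is a vertex u ∈ V(G) having at least n neighbors in G among the vertices of V(G) ∖ S. -/
open Finset

open SimpleGraph in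
private lemma unique_nbr {VT : Type*} {T : SimpleGraph VT} (hT : T.IsAcyclic)
    {s : Set VT} (hconn : (T.induce s).Connected) {b : VT} (hb : b ∉ s)
    {y1 y2 : VT} (h1 : y1 ∈ s) (h2 : y2 ∈ s)
    (a1 : T.Adj b y1) (a2 : T.Adj b y2) : y1 = y2 := by
  classical
  by_contra hne
  obtain ⟨w⟩ := hconn ⟨y1, h1⟩ ⟨y2, h2⟩
  let w' : T.Walk y1 y2 := w.map (SimpleGraph.Embedding.induce s).toHom
  have hsup : ∀ x ∈ w'.support, x ∈ s := by
    intro x hx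
    have hx' : x ∈ (w.map (SimpleGraph.Embedding.induce s).toHom).support := hx
    rw [Walk.support_map] at hx'
    obtain ⟨z, _, rfl⟩ := List.mem_map.mp hx'
    exact z.2
  set p := w'.toPath with hp
  have hbp : b ∉ (p : T.Walk y1 y2).support := fun h =>
    hb (hsup _ (Walk.support_toPath_subset w' h))
  have hq : (Walk.cons a1 (p : T.Walk y1 y2)).IsPath := p.2.cons hbp
  have heq := isAcyclic_iff_path_unique.mp hT ⟨_, hq⟩ (Path.singleton a2)
  have hlen := congrArg (fun q : T.Path b y2 => (q : T.Walk b y2).length) heq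
  simp [Path.singleton, Walk.length_cons] at hlen
  exact hne (Walk.Nil.eq hlen)

/-- **Claim 3.3 (generalized)**: if `T` is a tree on `n` vertices, `G` has at least `2n - 1`
vertices, `Ḡ` does not contain `T`, and some subtree of `T` on `|S|` vertices embeds into
`Ḡ` with image exactly `S`, then some vertex of `G` has at least `n` `G`-neighbors outside
`S`. -/
theorem exists_high_degree_outside {VT VG : Type*} [Fintype VT] [Fintype VG]
    [DecidableEq VG]
    (n : ℕ) (T : SimpleGraph VT) (hT : T.IsTree) (hTcard : Fintype.card VT = n)
    (G : SimpleGraph VG) [DecidableRel G.Adj] (hGcard : 2 * n - 1 ≤ Fintype.card VG)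
    (hnoT : ¬ Contains Gᶜ T)
    (S : Finset VG)
    (hemb : ∃ s : Finset VT, s.card = S.card ∧ (T.induce (s : Set VT)).Connected ∧
        ∃ f : VT → VG, Set.InjOn f (s : Set VT) ∧ s.image f = S ∧
          ∀ a ∈ s, ∀ b ∈ s, T.Adj a b → Gᶜ.Adj (f a) (f b)) :
    ∃ u : VG, n ≤ (G.neighborFinset u \ S).card := by
  classical
  have hn1 : 1 ≤ n := by
    have : Nonempty VT := hT.isConnected.nonempty
    have h := Fintype.card_pos (α := VT); omega
  -- contradiction when the embedded subtree is all of T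
  have huniv : ∀ (f : VT → VG), (Set.InjOn f ((Finset.univ : Finset VT) : Set VT)) →
      (∀ a ∈ (Finset.univ : Finset VT), ∀ b ∈ (Finset.univ : Finset VT),
        T.Adj a b → Gᶜ.Adj (f a) (f b)) → False := by
    intro f hinj hadj
    refine hnoT ⟨f, ?_, fun u v h => hadj u (mem_univ u) v (mem_univ v) h⟩
    rw [Finset.coe_univ] at hinj
    exact Set.injOn_univ.mp hinj
  suffices H : ∀ k (S : Finset VG),
      (∃ s : Finset VT, s.card = S.card ∧ (T.induce (s : Set VT)).Connected ∧
        ∃ f : VT → VG, Set.InjOn f (s : Set VT) ∧ s.image f = S ∧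
          ∀ a ∈ s, ∀ b ∈ s, T.Adj a b → Gᶜ.Adj (f a) (f b)) →
      n - S.card ≤ k →
      ∃ u : VG, n ≤ (G.neighborFinset u \ S).card by
    exact H (n - S.card) S hemb le_rfl
  intro k
  induction k with
  | zero =>
    rintro S ⟨s, hs, hconn, f, hinj, himg, hadj⟩ hk
    exfalso
    have hsu : s = Finset.univ := by
      apply Finset.eq_univ_of_card
      have := Finset.card_le_univ s
      omega
    subst hsu
    exact huniv f hinj hadj
  | succ k ih =>
    rintro S ⟨s, hs, hconn, f, hinj, himg, hadj⟩ hk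
    by_cases hfull : Fintype.card VT ≤ s.card
    · exfalso
      have hsu : s = Finset.univ := by
        apply Finset.eq_univ_of_card
        have := Finset.card_le_univ s
        omega
      subst hsu
      exact huniv f hinj hadj
    · -- s is a proper nonempty subset
      have hscard : s.card < n := by omega
      obtain ⟨⟨x0, hx0⟩⟩ := hconn.nonempty
      have hb0 : ∃ b, b ∉ s := by
        by_contra h
        push_neg at h
        have := Finset.eq_univ_iff_forall.mpr h
        rw [this, Finset.card_univ] at hscard
        omega
      obtain ⟨b0, hb0⟩ := hb0
      obtain ⟨p⟩ := hT.isConnected.preconnected x0 b0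
      obtain ⟨d, -, ha, hb⟩ := p.exists_boundary_dart (↑s : Set VT) hx0 (by simpa using hb0)
      set a := d.fst with hadef
      set b := d.snd with hbdef
      have hab : T.Adj a b := d.adj
      have has : a ∈ s := ha
      have hbs : b ∉ s := hb
      set v := f a with hv
      by_cases hdeg : n ≤ (G.neighborFinset v \ S).card
      · exact ⟨v, hdeg⟩
      -- find a non-neighbor w of v outside S
      have hvS : v ∈ S := by
        rw [← himg]; exact Finset.mem_image_of_mem f has
      have hcompl : n ≤ Sᶜ.card := by
        rw [Finset.card_compl]
        have hSn : S.card < n := by rw [← hs]; exact hscard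
        omega
      have hinter : (Sᶜ ∩ G.neighborFinset v) = G.neighborFinset v \ S := by
        ext x
        simp only [Finset.mem_inter, Finset.mem_compl, Finset.mem_sdiff]
        tauto
      have hW : (Sᶜ \ G.neighborFinset v).Nonempty := by
        rw [← Finset.card_pos]
        have h1 : (Sᶜ \ G.neighborFinset v).card + (Sᶜ ∩ G.neighborFinset v).card = Sᶜ.card :=
          Finset.card_sdiff_add_card_inter _ _
        rw [hinter] at h1
        omega
      obtain ⟨w, hw⟩ := hW
      rw [Finset.mem_sdiff, Finset.mem_compl] at hw
      obtain ⟨hwS, hwN⟩ := hw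
      have hvw : Gᶜ.Adj v w := by
        rw [SimpleGraph.compl_adj]
        refine ⟨fun h => hwS (by rw [← h]; exact hvS), fun h => hwN ?_⟩
        rw [SimpleGraph.mem_neighborFinset]
        exact h
      -- extend the embedding
      have hfb : ∀ x ∈ s, Function.update f b w x = f x := by
        intro x hx
        apply Function.update_of_ne
        rintro rfl
        exact hbs hx
      refine (ih (insert w S) ⟨insert b s, ?_, ?_, Function.update f b w, ?_, ?_, ?_⟩ ?_).imp ?_
      · rw [Finset.card_insert_of_notMem hbs, Finset.card_insert_of_notMem hwS, hs]
      · have hset : ((insert b s : Finset VT) : Set VT) = ({b, a} : Set VT) ∪ ↑s := by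
          ext x
          simp only [Finset.coe_insert, Set.mem_insert_iff, Set.mem_union,
            Set.mem_singleton_iff, Finset.mem_coe]
          constructor
          · rintro (rfl | h)
            · exact Or.inl (Or.inl rfl)
            · exact Or.inr h
          · rintro ((rfl | rfl) | h)
            · exact Or.inl rfl
            · exact Or.inr has
            · exact Or.inr h
        rw [hset]
        exact SimpleGraph.induce_union_connected
          (SimpleGraph.induce_pair_connected_of_adj hab.symm).preconnected hconn.preconnected ⟨a, Or.inr rfl, has⟩
      · -- injectivity
        intro x hx y hy hxy
        simp only [Finset.coe_insert, Set.mem_insert_iff, Finset.mem_coe] at hx hy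
        rcases hx with rfl | hx <;> rcases hy with rfl | hy
        · rfl
        · exfalso
          rw [Function.update_self, hfb y hy] at hxy
          exact hwS (by rw [← himg, hxy]; exact Finset.mem_image_of_mem f hy)
        · exfalso
          rw [Function.update_self, hfb x hx] at hxy
          exact hwS (by rw [← himg, ← hxy]; exact Finset.mem_image_of_mem f hx)
        · rw [hfb x hx, hfb y hy] at hxy
          exact hinj hx hy hxy
      · rw [Finset.image_insert, Function.update_self]
        congr 1
        · rw [← himg]
          apply Finset.image_congr
          intro x hx
          exact hfb x hx
      · -- adjacency
        intro x hx y hy hxy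
        rcases Finset.mem_insert.mp hx with rfl | hx <;>
          rcases Finset.mem_insert.mp hy with rfl | hy
        · exact absurd hxy (T.irrefl)
        · have hya : y = a := unique_nbr hT.IsAcyclic hconn hbs hy has hxy hab.symm
          rw [Function.update_self, hfb y hy, hya]
          exact hvw.symm
        · have hxa : x = a := unique_nbr hT.IsAcyclic hconn hbs hx has hxy.symm hab.symm
          rw [Function.update_self, hfb x hx, hxa]
          exact hvw
        · rw [hfb x hx, hfb y hy]
          exact hadj x hx y hy hxy
      · rw [Finset.card_insert_of_notMem hwS]
        omega
      · intro u hu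
        exact le_trans hu (Finset.card_le_card
          (Finset.sdiff_subset_sdiff (Finset.Subset.refl _) (Finset.subset_insert w S)))
end

section
/- Let m ≥ 9 and n ≥ m² − m + 1. Let T be a tree on n vertices and let G be a graph whose complement Ḡ does not contain T as a subgraph. Suppose U_1 and U_2 are disjoint independent sets of G, each of size at least n − 2m + 2. Then every vertex w ∈ U_1 has at most 2m − 3 neighbors in U_2 in the complement Ḡ, and every vertex w ∈ U_2 has at most 2m − 3 neighbors in U_1 in Ḡ. -/
open Finset

open SimpleGraph

section TreeLemmas

open scoped Classical

variable {V : Type*} [Fintype V]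

/-- The set of vertices reachable from `u` while avoiding `v`. -/
noncomputable def comp (T : SimpleGraph V) (v u : V) : Finset V :=
  Finset.univ.filter fun x => ∃ p : T.Walk u x, v ∉ p.support

lemma mem_comp {T : SimpleGraph V} {v u x : V} :
    x ∈ comp T v u ↔ ∃ p : T.Walk u x, v ∉ p.support := by
  simp [comp]

lemma start_mem_comp {T : SimpleGraph V} {v u : V} (hne : v ≠ u) : u ∈ comp T v u :=
  mem_comp.2 ⟨Walk.nil, by simpa using hne⟩

lemma notMem_comp_left {T : SimpleGraph V} {v u : V} : v ∉ comp T v u := by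
  intro h
  obtain ⟨p, hp⟩ := mem_comp.1 h
  exact hp p.end_mem_support

lemma adj_mem_comp {T : SimpleGraph V} {v u x y : V} (hx : x ∈ comp T v u)
    (hxy : T.Adj x y) (hy : y ≠ v) : y ∈ comp T v u := by
  obtain ⟨p, hp⟩ := mem_comp.1 hx
  refine mem_comp.2 ⟨p.concat hxy, ?_⟩
  rw [Walk.support_concat]
  simp only [List.concat_eq_append, List.mem_append, List.mem_singleton]
  rintro (h | h)
  · exact hp h
  · exact hy h.symm

lemma comp_path {T : SimpleGraph V} {v u x : V} (hx : x ∈ comp T v u) :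
    ∃ p : T.Path u x, v ∉ (p : T.Walk u x).support := by
  obtain ⟨p, hp⟩ := mem_comp.1 hx
  exact ⟨p.toPath, fun h => hp (Walk.support_toPath_subset p h)⟩

/-- If `v ∈ p.support` for `p : T.Walk u x`, then `v` is reachable from `u` avoiding
anything not on the prefix... we use `takeUntil`. -/
lemma mem_comp_of_mem_support {T : SimpleGraph V} {v u w x : V} (p : T.Walk u x)
    (hp : w ∉ p.support) (hv : v ∈ p.support) : v ∈ comp T w u := by
  refine mem_comp.2 ⟨p.takeUntil v hv, fun h => hp ?_⟩
  exact Walk.support_takeUntil_subset p hv h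

lemma comp_disjoint {T : SimpleGraph V} (hT : T.IsAcyclic) {u x y : V}
    (hux : T.Adj u x) (huy : T.Adj u y) (hxy : x ≠ y) {z : V}
    (hzx : z ∈ comp T u x) (hzy : z ∈ comp T u y) : False := by
  obtain ⟨p, hp⟩ := comp_path hzx
  obtain ⟨q, hq⟩ := comp_path hzy
  have hp1 : (Walk.cons hux (p : T.Walk x z)).IsPath := p.2.cons hp
  have hq1 : (Walk.cons huy (q : T.Walk y z)).IsPath := q.2.cons hq
  have heq : (⟨_, hp1⟩ : T.Path u z) = ⟨_, hq1⟩ := hT.path_unique _ _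
  have heq' : Walk.cons hux (p : T.Walk x z) = Walk.cons huy (q : T.Walk y z) :=
    congrArg Subtype.val heq
  have hs : (Walk.cons hux (p : T.Walk x z)).support =
      (Walk.cons huy (q : T.Walk y z)).support := by rw [heq']
  rw [Walk.support_cons, Walk.support_cons, Walk.support_eq_cons (p : T.Walk x z),
    Walk.support_eq_cons (q : T.Walk y z)] at hs
  simp only [List.cons.injEq] at hs
  exact hxy hs.2.1

lemma comp_cover {T : SimpleGraph V} (hconn : T.Connected) {v u : V} (hvu : T.Adj v u)
    (x : V) : x ∈ comp T v u ∨ x ∈ comp T u v := by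
  obtain ⟨p0⟩ := hconn u x
  set p : T.Path u x := p0.toPath with hpdef
  by_cases hv : v ∈ (p : T.Walk u x).support
  · right
    refine mem_comp.2 ⟨((p : T.Walk u x)).dropUntil v hv, ?_⟩
    intro hu
    have hnd := p.2.support_nodup
    rw [← Walk.take_spec (p : T.Walk u x) hv, Walk.support_append] at hnd
    have hdisj := List.disjoint_of_nodup_append hnd
    have hu1 : u ∈ ((p : T.Walk u x).takeUntil v hv).support :=
      Walk.start_mem_support _
    have hne : u ≠ v := hvu.ne'
    have hu2 : u ∈ ((p : T.Walk u x).dropUntil v hv).support.tail := by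
      have := Walk.support_eq_cons ((p : T.Walk u x).dropUntil v hv)
      rw [this, List.mem_cons] at hu
      rcases hu with h | h
      · exact absurd h hne
      · exact h
    exact hdisj hu1 hu2
  · exact Or.inl (mem_comp.2 ⟨p, hv⟩)

lemma comp_piece_subset {T : SimpleGraph V} (hT : T.IsAcyclic) {v u x : V}
    (hvu : T.Adj v u) (hux : T.Adj u x) (hxv : x ≠ v) :
    comp T u x ⊆ (comp T v u).erase u := by
  intro y hy
  obtain ⟨p, hp⟩ := comp_path hy
  have hyu : y ≠ u := by
    rintro rfl
    exact hp (Walk.end_mem_support _)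
  refine Finset.mem_erase.2 ⟨hyu, ?_⟩
  have hvp : v ∉ (p : T.Walk x y).support := by
    intro hv
    have hvcomp : v ∈ comp T u x := mem_comp_of_mem_support _ hp hv
    have hvcomp' : v ∈ comp T u v := start_mem_comp hvu.ne'
    exact comp_disjoint hT hux hvu.symm hxv hvcomp hvcomp'
  refine mem_comp.2 ⟨Walk.cons hux (p : T.Walk x y), ?_⟩
  rw [Walk.support_cons, List.mem_cons]
  rintro (h | h)
  · exact hvu.ne h
  · exact hvp h

lemma comp_piece_cover {T : SimpleGraph V} {v u y : V} (hvu : T.Adj v u)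
    (hy : y ∈ comp T v u) (hyu : y ≠ u) :
    ∃ x, T.Adj u x ∧ x ≠ v ∧ y ∈ comp T u x := by
  obtain ⟨p, hp⟩ := comp_path hy
  obtain ⟨w, hw, hv⟩ : ∃ w : T.Walk u y, w.IsPath ∧ v ∉ w.support := ⟨p, p.2, hp⟩
  cases w with
  | nil => exact absurd rfl hyu.symm
  | @cons _ b _ h q =>
    rw [Walk.cons_isPath_iff] at hw
    rw [Walk.support_cons] at hv
    simp only [List.mem_cons, not_or] at hv
    refine ⟨b, h, ?_, mem_comp.2 ⟨q, hw.2⟩⟩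
    intro hbv
    exact hv.2 (hbv ▸ q.start_mem_support)

end TreeLemmas

section TreeLemmas2

open scoped Classical

variable {V : Type*} [Fintype V]

lemma greedy {ι : Type*} [DecidableEq ι] (s : Finset ι) (f : ι → ℕ) (a : ℕ) :
    ∀ k, (∀ i ∈ s, f i ≤ a) → k ≤ ∑ i ∈ s, f i →
    ∃ t, t ⊆ s ∧ k ≤ ∑ i ∈ t, f i ∧ ∑ i ∈ t, f i ≤ k - 1 + a ∧ t.card ≤ k := by
  intro k
  induction k with
  | zero => exact fun _ _ => ⟨∅, Finset.empty_subset _, by simp, by simp, by simp⟩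
  | succ k ih =>
    intro hf hk
    obtain ⟨t, hts, h1, h2, h3⟩ := ih hf (le_trans (Nat.le_succ k) hk)
    by_cases hcase : k + 1 ≤ ∑ i ∈ t, f i
    · exact ⟨t, hts, hcase, by omega, by omega⟩
    · have hsd := Finset.sum_sdiff (f := f) hts
      have hdiff : 0 < ∑ i ∈ s \ t, f i := by omega
      obtain ⟨i, hi, hfi⟩ : ∃ i ∈ s \ t, 0 < f i := by
        by_contra hno
        push_neg at hno
        have : ∑ i ∈ s \ t, f i = 0 := Finset.sum_eq_zero (fun i hi => by
          have := hno i hi; omega)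
        omega
      rw [Finset.mem_sdiff] at hi
      have hfia : f i ≤ a := hf i hi.1
      refine ⟨insert i t, Finset.insert_subset hi.1 hts, ?_, ?_, ?_⟩
      · rw [Finset.sum_insert hi.2]; omega
      · rw [Finset.sum_insert hi.2]; omega
      · rw [Finset.card_insert_of_notMem hi.2]; omega

lemma comp_partition {T : SimpleGraph V} (hT : T.IsAcyclic) {v u : V} (hvu : T.Adj v u) :
    (comp T v u).erase u =
      (Finset.univ.filter fun x => T.Adj u x ∧ x ≠ v).biUnion (fun x => comp T u x) := by
  ext y
  constructor
  · intro hy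
    rw [Finset.mem_erase] at hy
    obtain ⟨x, hx1, hx2, hx3⟩ := comp_piece_cover hvu hy.2 hy.1
    exact Finset.mem_biUnion.2 ⟨x, by simp [hx1, hx2], hx3⟩
  · intro hy
    obtain ⟨x, hx, hyx⟩ := Finset.mem_biUnion.1 hy
    simp only [Finset.mem_filter] at hx
    exact comp_piece_subset hT hvu hx.2.1 hx.2.2 hyx

lemma exists_adj {T : SimpleGraph V} (hconn : T.Connected) (hcard : 2 ≤ Fintype.card V) :
    ∃ v u, T.Adj v u := by
  obtain ⟨a, b, hab⟩ := Fintype.exists_pair_of_one_lt_card (α := V) (by omega)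
  obtain ⟨p⟩ := hconn a b
  cases p with
  | nil => exact absurd rfl hab
  | cons h _ => exact ⟨_, _, h⟩

lemma chop {T : SimpleGraph V} (hT : T.IsTree) {k : ℕ} (hk : 1 ≤ k)
    (hk2 : 2 * k ≤ Fintype.card V) :
    ∃ (v' : V) (Q : Finset V), v' ∉ Q ∧ k ≤ Q.card ∧ Q.card ≤ 2 * k ∧
      (Q.filter fun y => T.Adj v' y).card ≤ k ∧
      ∀ a b, T.Adj a b → a ∈ Q → b ∉ Q → b = v' := by
  have hacy := hT.IsAcyclic
  have hconn := hT.isConnected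
  obtain ⟨a, b, hab⟩ := exists_adj hconn (by omega)
  set D : Finset (V × V) :=
    Finset.univ.filter (fun pr => T.Adj pr.1 pr.2 ∧ k ≤ (comp T pr.1 pr.2).card) with hD
  have hDne : D.Nonempty := by
    have hcover := comp_cover hconn hab
    have hle : Fintype.card V ≤ (comp T a b).card + (comp T b a).card := by
      have hsub : (Finset.univ : Finset V) ⊆ comp T a b ∪ comp T b a :=
        fun x _ => Finset.mem_union.2 (hcover x)
      calc Fintype.card V = (Finset.univ : Finset V).card := Finset.card_univ.symm
        _ ≤ (comp T a b ∪ comp T b a).card := Finset.card_le_card hsub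
        _ ≤ _ := Finset.card_union_le _ _
    by_cases h : k ≤ (comp T a b).card
    · exact ⟨(a, b), by simp [hD, hab, h]⟩
    · refine ⟨(b, a), ?_⟩
      simp only [hD, Finset.mem_filter, Finset.mem_univ, true_and]
      exact ⟨hab.symm, by omega⟩
  obtain ⟨pr, hprD, hmin⟩ := Finset.exists_min_image D (fun pr => (comp T pr.1 pr.2).card) hDne
  obtain ⟨v, u⟩ := pr
  simp only [hD, Finset.mem_filter, Finset.mem_univ, true_and] at hprD
  obtain ⟨hvu, hkc⟩ := hprD
  by_cases hck : (comp T v u).card = k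
  · refine ⟨v, comp T v u, notMem_comp_left, by omega, by omega, ?_, ?_⟩
    · have hsub : (comp T v u).filter (fun y => T.Adj v y) ⊆ {u} := by
        intro y hy
        simp only [Finset.mem_filter] at hy
        obtain ⟨hy1, hy2⟩ := hy
        rw [Finset.mem_singleton]
        by_contra hyu
        exact comp_disjoint hacy hvu hy2 (fun h => hyu h.symm) hy1 (start_mem_comp hy2.ne)
      calc ((comp T v u).filter (fun y => T.Adj v y)).card ≤ ({u} : Finset V).card :=
            Finset.card_le_card hsub
        _ ≤ k := by simp; omega
    · intro x y hadj hx hy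
      by_contra hyv
      exact hy (adj_mem_comp hx hadj hyv)
  · have hck' : k < (comp T v u).card := lt_of_le_of_ne hkc (fun h => hck h.symm)
    set N := Finset.univ.filter (fun x => T.Adj u x ∧ x ≠ v) with hN
    have hdisjN : ∀ x ∈ N, ∀ y ∈ N, x ≠ y →
        Disjoint (comp T u x) (comp T u y) := by
      intro x hx y hy hxy
      simp only [hN, Finset.mem_filter, Finset.mem_univ, true_and] at hx hy
      exact Finset.disjoint_left.2 fun z hzx hzy => comp_disjoint hacy hx.1 hy.1 hxy hzx hzy
    have hpart := comp_partition hacy hvu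
    have hsum : ∑ x ∈ N, (comp T u x).card = (comp T v u).card - 1 := by
      rw [← Finset.card_biUnion hdisjN, ← hpart,
        Finset.card_erase_of_mem (start_mem_comp hvu.ne)]
    have hpieces : ∀ x ∈ N, (comp T u x).card ≤ k - 1 := by
      intro x hx
      have hx' := hx
      simp only [hN, Finset.mem_filter, Finset.mem_univ, true_and] at hx'
      by_contra hbig
      push_neg at hbig
      have hxD : (u, x) ∈ D := by
        simp only [hD, Finset.mem_filter, Finset.mem_univ, true_and]
        exact ⟨hx'.1, by omega⟩
      have hmin' := hmin _ hxD
      have hsub := comp_piece_subset hacy hvu hx'.1 hx'.2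
      have hle : (comp T u x).card ≤ (comp T v u).card - 1 := by
        calc (comp T u x).card ≤ ((comp T v u).erase u).card := Finset.card_le_card hsub
          _ = (comp T v u).card - 1 := Finset.card_erase_of_mem (start_mem_comp hvu.ne)
      simp only at hmin'
      omega
    have hsumk : k ≤ ∑ x ∈ N, (comp T u x).card := by omega
    obtain ⟨t, hts, hg1, hg2, hg3⟩ := greedy N (fun x => (comp T u x).card) (k - 1) k hpieces hsumk
    have hdisjt : ∀ x ∈ t, ∀ y ∈ t, x ≠ y → Disjoint (comp T u x) (comp T u y) :=
      fun x hx y hy => hdisjN x (hts hx) y (hts hy)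
    have hcardQ : (t.biUnion (fun x => comp T u x)).card = ∑ x ∈ t, (comp T u x).card :=
      Finset.card_biUnion hdisjt
    refine ⟨u, t.biUnion (fun x => comp T u x), ?_, ?_, ?_, ?_, ?_⟩
    · intro hu
      obtain ⟨x, _, hux⟩ := Finset.mem_biUnion.1 hu
      exact notMem_comp_left hux
    · omega
    · omega
    · have hsub : ((t.biUnion (fun x => comp T u x)).filter (fun y => T.Adj u y)) ⊆ t := by
        intro y hy
        simp only [Finset.mem_filter, Finset.mem_biUnion] at hy
        obtain ⟨⟨x, hx, hyx⟩, hadj⟩ := hy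
        have hyy : y ∈ comp T u y := start_mem_comp hadj.ne
        have hxN := hts hx
        simp only [hN, Finset.mem_filter, Finset.mem_univ, true_and] at hxN
        by_cases hxy : x = y
        · exact hxy ▸ hx
        · exact absurd hyy (Finset.disjoint_left.1 ((Finset.disjoint_left.2
            fun z hzx hzy => comp_disjoint hacy hxN.1 hadj hxy hzx hzy)) hyx)
      exact le_trans (Finset.card_le_card hsub) hg3
    · intro p q hadj hp hq
      obtain ⟨x, hx, hpx⟩ := Finset.mem_biUnion.1 hp
      by_contra hqu
      exact hq (Finset.mem_biUnion.2 ⟨x, hx, adj_mem_comp hpx hadj hqu⟩)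

end TreeLemmas2

section Embedding

lemma exists_injOn_finset {α β : Type*} [Nonempty β] (s : Finset α) (t : Finset β)
    (h : s.card ≤ t.card) :
    ∃ f : α → β, Set.InjOn f ↑s ∧ ∀ a ∈ s, f a ∈ t := by
  classical
  have hc : Fintype.card ↥s ≤ Fintype.card ↥t := by simpa [Fintype.card_coe] using h
  obtain ⟨e⟩ := Function.Embedding.nonempty_of_card_le hc
  refine ⟨fun a => if ha : a ∈ s then (e ⟨a, ha⟩ : β) else Classical.arbitrary β, ?_, ?_⟩
  · intro a ha b hb hab
    rw [Finset.mem_coe] at ha hb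
    simp only [dif_pos ha, dif_pos hb] at hab
    exact Subtype.mk_eq_mk.1 (e.injective (Subtype.ext hab))
  · intro a ha
    simp only [dif_pos ha]
    exact (e ⟨a, ha⟩).2

lemma aux_claim {VT VG : Type*} [Fintype VT] [Fintype VG] [DecidableEq VG]
    (m n : ℕ) (hm : 9 ≤ m) (hn : m ^ 2 - m + 1 ≤ n)
    (T : SimpleGraph VT) (hT : T.IsTree) (hTcard : Fintype.card VT = n)
    (G : SimpleGraph VG) [DecidableRel G.Adj] (hnoT : ¬ Contains Gᶜ T)
    (U1 U2 : Finset VG) (hdisj : Disjoint U1 U2)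
    (hind1 : ∀ a ∈ U1, ∀ b ∈ U1, ¬ G.Adj a b)
    (hind2 : ∀ a ∈ U2, ∀ b ∈ U2, ¬ G.Adj a b)
    (hc1 : n - 2 * m + 2 ≤ U1.card) (hc2 : n - 2 * m + 2 ≤ U2.card)
    (w : VG) (hw : w ∈ U1) : (Gᶜ.neighborFinset w ∩ U2).card ≤ 2 * m - 3 := by
  classical
  by_contra hbig
  push_neg at hbig
  apply hnoT
  have hne : Nonempty VG := ⟨w⟩
  have hmm : 9 * m ≤ m * m := Nat.mul_le_mul_right m hm
  have hn' : m * m - m + 1 ≤ n := by rwa [pow_two] at hn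
  set S := Gᶜ.neighborFinset w ∩ U2 with hSdef
  have hS : 2 * m - 2 ≤ S.card := by omega
  by_cases hbig1 : n ≤ U1.card
  · obtain ⟨f, hfinj, hft⟩ := exists_injOn_finset (Finset.univ : Finset VT) U1
      (by rw [Finset.card_univ, hTcard]; exact hbig1)
    refine ⟨f, fun a b hab => hfinj (by simp) (by simp) hab, ?_⟩
    intro a b hab
    rw [SimpleGraph.compl_adj]
    exact ⟨fun h => hab.ne (hfinj (by simp) (by simp) h),
      hind1 _ (hft a (Finset.mem_univ a)) _ (hft b (Finset.mem_univ b))⟩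
  · push_neg at hbig1
    set k := n - U1.card with hkdef
    have hk1 : 1 ≤ k := by omega
    have hk2m : k ≤ 2 * m - 2 := by omega
    have hkcard : 2 * k ≤ Fintype.card VT := by rw [hTcard]; omega
    obtain ⟨v', Q, hv'Q, hQ1, hQ2, hRcard, hbd⟩ := chop hT hk1 hkcard
    obtain ⟨S', hS'S, hS'card⟩ := Finset.exists_subset_card_eq hS
    have hS'U2 : S' ⊆ U2 := hS'S.trans Finset.inter_subset_right
    set R := Q.filter (fun y => T.Adj v' y) with hRdef
    have hRQ : R ⊆ Q := Finset.filter_subset _ _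
    obtain ⟨f1, hf1inj, hf1t⟩ := exists_injOn_finset R S' (by rw [hS'card]; omega)
    have hcQR : (Q \ R).card ≤ (U2 \ S').card := by
      have h1 := Finset.card_sdiff_of_subset hS'U2
      have h2 := Finset.card_le_card (Finset.sdiff_subset (s := Q) (t := R))
      omega
    obtain ⟨f2, hf2inj, hf2t⟩ := exists_injOn_finset (Q \ R) (U2 \ S') hcQR
    have hcQc : ((Qᶜ : Finset VT).erase v').card ≤ (U1.erase w).card := by
      rw [Finset.card_erase_of_mem (Finset.mem_compl.2 hv'Q), Finset.card_erase_of_mem hw,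
        Finset.card_compl, hTcard]
      omega
    obtain ⟨f3, hf3inj, hf3t⟩ := exists_injOn_finset ((Qᶜ : Finset VT).erase v') (U1.erase w) hcQc
    set F : VT → VG := fun x =>
      if x ∈ R then f1 x else if x ∈ Q then f2 x else if x = v' then w else f3 x with hF
    have hregR : ∀ x, x ∈ R → F x ∈ S' := fun x hx => by
      simp only [hF, if_pos hx]; exact hf1t x hx
    have hregQ : ∀ x, x ∉ R → x ∈ Q → F x ∈ U2 \ S' := fun x hxR hxQ => by
      simp only [hF, if_neg hxR, if_pos hxQ]; exact hf2t x (Finset.mem_sdiff.2 ⟨hxQ, hxR⟩)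
    have hregv : F v' = w := by
      show (if v' ∈ R then f1 v' else if v' ∈ Q then f2 v' else if v' = v' then w else f3 v') = w
      rw [if_neg (fun h => hv'Q (hRQ h)), if_neg hv'Q, if_pos rfl]
    have hregO : ∀ x, x ∉ Q → x ≠ v' → F x ∈ U1.erase w := fun x hx hxv => by
      simp only [hF, if_neg (fun h => hx (hRQ h)), if_neg hx, if_neg hxv]
      exact hf3t x (Finset.mem_erase.2 ⟨hxv, Finset.mem_compl.2 hx⟩)
    have hQmem : ∀ x, x ∈ Q → F x ∈ U2 := fun x hx => by
      by_cases hxR : x ∈ R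
      · exact hS'U2 (hregR x hxR)
      · exact (Finset.mem_sdiff.1 (hregQ x hxR hx)).1
    have hQcmem : ∀ x, x ∉ Q → F x ∈ U1 := fun x hx => by
      by_cases hxv : x = v'
      · rw [hxv, hregv]; exact hw
      · exact Finset.mem_of_mem_erase (hregO x hx hxv)
    have hFinj : Function.Injective F := by
      intro a b hab
      by_cases haQ : a ∈ Q <;> by_cases hbQ : b ∈ Q
      · by_cases haR : a ∈ R <;> by_cases hbR : b ∈ R
        · refine hf1inj (Finset.mem_coe.2 haR) (Finset.mem_coe.2 hbR) ?_
          simpa only [hF, if_pos haR, if_pos hbR] using hab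
        · exact absurd (hab ▸ hregR a haR) (Finset.mem_sdiff.1 (hregQ b hbR hbQ)).2
        · exact absurd (hab.symm ▸ hregR b hbR) (Finset.mem_sdiff.1 (hregQ a haR haQ)).2
        · refine hf2inj (Finset.mem_coe.2 (Finset.mem_sdiff.2 ⟨haQ, haR⟩))
            (Finset.mem_coe.2 (Finset.mem_sdiff.2 ⟨hbQ, hbR⟩)) ?_
          simpa only [hF, if_neg haR, if_pos haQ, if_neg hbR, if_pos hbQ] using hab
      · exact absurd (hQcmem b hbQ) (Finset.disjoint_right.1 hdisj (hab ▸ hQmem a haQ))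
      · exact absurd (hQcmem a haQ) (Finset.disjoint_right.1 hdisj (hab.symm ▸ hQmem b hbQ))
      · by_cases hav : a = v' <;> by_cases hbv : b = v'
        · rw [hav, hbv]
        · exfalso
          refine (Finset.mem_erase.1 (hregO b hbQ hbv)).1 ?_
          rw [← hab, hav, hregv]
        · exfalso
          refine (Finset.mem_erase.1 (hregO a haQ hav)).1 ?_
          rw [hab, hbv, hregv]
        · refine hf3inj (Finset.mem_coe.2 (Finset.mem_erase.2 ⟨hav, Finset.mem_compl.2 haQ⟩))
            (Finset.mem_coe.2 (Finset.mem_erase.2 ⟨hbv, Finset.mem_compl.2 hbQ⟩)) ?_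
          simpa only [hF, if_neg (fun h => haQ (hRQ h)), if_neg haQ, if_neg hav,
            if_neg (fun h => hbQ (hRQ h)), if_neg hbQ, if_neg hbv] using hab
    refine ⟨F, hFinj, ?_⟩
    intro a b hab
    have hFne : F a ≠ F b := fun h => hab.ne (hFinj h)
    by_cases haQ : a ∈ Q <;> by_cases hbQ : b ∈ Q
    · rw [SimpleGraph.compl_adj]
      exact ⟨hFne, hind2 _ (hQmem a haQ) _ (hQmem b hbQ)⟩
    · have hbv : b = v' := hbd a b hab haQ hbQ
      have haR : a ∈ R := Finset.mem_filter.2 ⟨haQ, hbv ▸ hab.symm⟩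
      have hFa : F a ∈ S := hS'S (hregR a haR)
      have hadj : Gᶜ.Adj w (F a) :=
        (SimpleGraph.mem_neighborFinset _ _ _).1 (Finset.mem_inter.1 hFa).1
      rw [hbv, hregv]
      exact hadj.symm
    · have hav : a = v' := hbd b a hab.symm hbQ haQ
      have hbR : b ∈ R := Finset.mem_filter.2 ⟨hbQ, hav ▸ hab⟩
      have hFb : F b ∈ S := hS'S (hregR b hbR)
      have hadj : Gᶜ.Adj w (F b) :=
        (SimpleGraph.mem_neighborFinset _ _ _).1 (Finset.mem_inter.1 hFb).1
      rw [hav, hregv]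
      exact hadj
    · rw [SimpleGraph.compl_adj]
      exact ⟨hFne, hind1 _ (hQcmem a haQ) _ (hQcmem b hbQ)⟩

end Embedding

/-- **Claim 3.4**: if `Ḡ` does not contain the tree `T` on `n` vertices and `U₁, U₂` are
disjoint independent sets of `G` of size at least `n - 2m + 2`, then every vertex of `U₁`
has at most `2m - 3` `Ḡ`-neighbors in `U₂`, and vice versa. -/
theorem few_complement_neighbors_between_independent_sets
    {VT VG : Type*} [Fintype VT] [Fintype VG] [DecidableEq VG]
    (m n : ℕ) (hm : 9 ≤ m) (hn : m ^ 2 - m + 1 ≤ n)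
    (T : SimpleGraph VT) (hT : T.IsTree) (hTcard : Fintype.card VT = n)
    (G : SimpleGraph VG) [DecidableRel G.Adj] (hnoT : ¬ Contains Gᶜ T)
    (U1 U2 : Finset VG) (hdisj : Disjoint U1 U2)
    (hind1 : ∀ a ∈ U1, ∀ b ∈ U1, ¬ G.Adj a b)
    (hind2 : ∀ a ∈ U2, ∀ b ∈ U2, ¬ G.Adj a b)
    (hc1 : n - 2 * m + 2 ≤ U1.card) (hc2 : n - 2 * m + 2 ≤ U2.card) :
    (∀ w ∈ U1, (Gᶜ.neighborFinset w ∩ U2).card ≤ 2 * m - 3) ∧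
      (∀ w ∈ U2, (Gᶜ.neighborFinset w ∩ U1).card ≤ 2 * m - 3) :=
  ⟨fun w hw => aux_claim m n hm hn T hT hTcard G hnoT U1 U2 hdisj hind1 hind2 hc1 hc2 w hw,
   fun w hw => aux_claim m n hm hn T hT hTcard G hnoT U2 U1 hdisj.symm hind2 hind1 hc2 hc1 w hw⟩
end

section
/- Let m ≥ 9 and n ≥ m² − m + 1. Let T be a tree on n vertices with maximum degree Δ(T) < 11n/20 and let G be a graph whose complement Ḡ does not contain T as a subgraph. Suppose U_1 and U_2 are disjoint independent sets of G, each of size at least n − 2m + 2. Then every vertex w ∈ V(G) ∖ (U_1 ∪ U_2) satisfies either d̄_{U_1}(w) < 11n/40 or d̄_{U_2}(w) < 11n/40, where d̄_{U_i}(w) is the number of neighbors of w in U_i in the complement Ḡ. -/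
open Finset

namespace ClaimAux

open SimpleGraph
open scoped Classical

variable {V : Type*} {T : SimpleGraph V}

/-- The unique path between two vertices in a tree. -/
noncomputable def pth (hT : T.IsTree) (u v : V) : T.Walk u v :=
  (hT.existsUnique_path u v).exists.choose

lemma pth_isPath (hT : T.IsTree) (u v : V) : (pth hT u v).IsPath :=
  (hT.existsUnique_path u v).exists.choose_spec

lemma pth_eq (hT : T.IsTree) {u v : V} {p : T.Walk u v} (hp : p.IsPath) :
    pth hT u v = p := by
  obtain ⟨q, hq, huniq⟩ := hT.existsUnique_path u v
  rw [huniq _ hp, ← huniq _ (pth_isPath hT u v)]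

lemma pth_self (hT : T.IsTree) (u : V) : pth hT u u = Walk.nil :=
  pth_eq hT Walk.IsPath.nil

/-- `Rel hT v x u` : the unique path from `x` to `u` avoids `v`
("`u` is in the branch of `x` when `v` is deleted"). -/
def Rel (hT : T.IsTree) (v x u : V) : Prop := v ∉ (pth hT x u).support

lemma rel_refl (hT : T.IsTree) {v u : V} (h : v ≠ u) : Rel hT v u u := by
  unfold Rel
  rw [pth_self hT u, Walk.support_nil]
  simp [h]

lemma rel_symm (hT : T.IsTree) {v x u : V} (h : Rel hT v x u) : Rel hT v u x := by
  unfold Rel at h ⊢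
  have : pth hT u x = (pth hT x u).reverse := pth_eq hT (pth_isPath hT x u).reverse
  rw [this, Walk.support_reverse, List.mem_reverse]
  exact h

lemma rel_trans (hT : T.IsTree) {v x u y : V} (h1 : Rel hT v x u) (h2 : Rel hT v u y) :
    Rel hT v x y := by
  unfold Rel at h1 h2 ⊢
  have hpath : (((pth hT x u).append (pth hT u y)).toPath : T.Walk x y).IsPath :=
    ((pth hT x u).append (pth hT u y)).toPath.2
  rw [pth_eq hT hpath]
  intro hv
  have := Walk.support_toPath_subset _ hv
  rw [Walk.mem_support_append_iff] at this
  tauto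

lemma rel_adj (hT : T.IsTree) {v u u' : V} (h : T.Adj u u') (h1 : v ≠ u) (h2 : v ≠ u') :
    Rel hT v u u' := by
  unfold Rel
  have : pth hT u u' = Walk.cons h Walk.nil :=
    pth_eq hT (by rw [Walk.cons_isPath_iff]; simp [h.ne])
  rw [this, Walk.support_cons, Walk.support_nil]
  simp [h1, h2]

lemma exists_root (hT : T.IsTree) {u v : V} (h : u ≠ v) :
    ∃ x, T.Adj v x ∧ Rel hT v x u := by
  have hp : (pth hT v u).IsPath := pth_isPath hT v u
  rcases hpe : pth hT v u with _ | ⟨hadj, q⟩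
  · rw [hpe] at hp
    exact absurd rfl h.symm
  · rw [hpe, Walk.cons_isPath_iff] at hp
    refine ⟨_, hadj, ?_⟩
    unfold Rel
    rw [pth_eq hT hp.1]
    exact hp.2

lemma root_unique (hT : T.IsTree) {v x x' u : V} (hvx : T.Adj v x) (hvx' : T.Adj v x')
    (h1 : Rel hT v x u) (h2 : Rel hT v x' u) : x = x' := by
  have hxx' : Rel hT v x x' := rel_trans hT h1 (rel_symm hT h2)
  unfold Rel at hxx'
  have hP1 : (Walk.cons hvx (pth hT x x')).IsPath := by
    rw [Walk.cons_isPath_iff]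
    exact ⟨pth_isPath hT x x', hxx'⟩
  have hP2 : (Walk.cons hvx' (Walk.nil : T.Walk x' x')).IsPath := by
    rw [Walk.cons_isPath_iff]
    simp [hvx'.ne]
  have := (pth_eq hT hP1).symm.trans (pth_eq hT hP2)
  have hlen := congrArg Walk.length this
  simp only [Walk.length_cons, Walk.length_nil] at hlen
  have hzero : (pth hT x x').length = 0 := by omega
  exact Walk.eq_of_length_eq_zero hzero

lemma rel_flip (hT : T.IsTree) {x y u : V} (hxy : T.Adj x y) :
    Rel hT x y u ↔ ¬ Rel hT y x u := by
  classical
  constructor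
  · intro hx hy
    -- hx : x ∉ (pth y u).support ; hy : y ∉ (pth x u).support
    have hP : (Walk.cons hxy (pth hT y u)).IsPath := by
      rw [Walk.cons_isPath_iff]
      exact ⟨pth_isPath hT y u, hx⟩
    apply hy
    rw [pth_eq hT hP, Walk.support_cons]
    exact List.mem_cons_of_mem _ ((pth hT y u).start_mem_support)
  · intro hy
    unfold Rel at hy
    rw [not_not] at hy
    -- hy : y ∈ (pth x u).support
    set P := pth hT x u with hPdef
    have hP : P.IsPath := pth_isPath hT x u
    have hdrop : (P.dropUntil y hy).IsPath := hP.dropUntil hy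
    unfold Rel
    rw [pth_eq hT hdrop]
    intro hxdrop
    have hnodup : P.support.Nodup := hP.support_nodup
    rw [← P.take_spec hy, Walk.support_append] at hnodup
    have hdisj := List.disjoint_of_nodup_append hnodup
    have hxtail : x ∈ (P.dropUntil y hy).support.tail := by
      have hcons := (P.dropUntil y hy).support_eq_cons
      rw [hcons] at hxdrop
      rcases List.mem_cons.mp hxdrop with h | h
      · exact absurd h hxy.ne
      · exact h
    exact hdisj ((P.takeUntil y hy).start_mem_support) hxtail

/-- The branch (component of `T - v`) rooted at `x`. -/
noncomputable def fiber [Fintype V] (hT : T.IsTree) (v x : V) : Finset V :=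
  Finset.univ.filter (fun u => u ≠ v ∧ Rel hT v x u)

lemma mem_fiber [Fintype V] (hT : T.IsTree) {v x u : V} :
    u ∈ fiber hT v x ↔ u ≠ v ∧ Rel hT v x u := by
  simp [fiber]

lemma self_mem_fiber [Fintype V] (hT : T.IsTree) {v x : V} (h : T.Adj v x) :
    x ∈ fiber hT v x :=
  (mem_fiber hT).mpr ⟨h.ne', rel_refl hT h.ne⟩

lemma fiber_disjoint [Fintype V] (hT : T.IsTree) {v x x' : V} (hvx : T.Adj v x)
    (hvx' : T.Adj v x') (hne : x ≠ x') : Disjoint (fiber hT v x) (fiber hT v x') := by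
  rw [Finset.disjoint_left]
  intro u hu hu'
  rw [mem_fiber hT] at hu hu'
  exact hne (root_unique hT hvx hvx' hu.2 hu'.2)

lemma mem_fiber_of_adj [Fintype V] (hT : T.IsTree) {v x u u' : V} (hu : u ∈ fiber hT v x)
    (hadj : T.Adj u u') (hne : u' ≠ v) : u' ∈ fiber hT v x := by
  rw [mem_fiber hT] at hu ⊢
  exact ⟨hne, rel_trans hT hu.2 (rel_adj hT hadj (Ne.symm hu.1) (Ne.symm hne))⟩

lemma fiber_compl [Fintype V] [DecidableEq V] (hT : T.IsTree) {x y : V} (hxy : T.Adj x y) :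
    fiber hT y x = (fiber hT x y)ᶜ := by
  ext u
  rw [Finset.mem_compl, mem_fiber hT, mem_fiber hT]
  by_cases hux : u = x
  · subst hux
    have h1 : Rel hT y u u := rel_refl hT (Ne.symm hxy.ne)
    simp [hxy.ne, h1]
  · by_cases huy : u = y
    · subst huy
      have h2 : Rel hT x u u := rel_refl hT hxy.ne
      simp [hxy.ne', h2]
    · have := rel_flip hT hxy (u := u)
      constructor
      · intro ⟨_, h⟩ ⟨_, h'⟩
        exact (this.mp h') h
      · intro h
        refine ⟨huy, ?_⟩
        by_contra hrel
        exact h ⟨hux, this.mpr hrel⟩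

lemma fiber_card_add [Fintype V] (hT : T.IsTree) {x y : V} (hxy : T.Adj x y) :
    (fiber hT x y).card + (fiber hT y x).card = Fintype.card V := by
  classical
  rw [fiber_compl hT hxy]
  exact Finset.card_add_card_compl _

lemma fiber_subset_lemma [Fintype V] (hT : T.IsTree) {v y z : V} (hvy : T.Adj v y)
    (hyz : T.Adj y z) (hzv : z ≠ v) : fiber hT y z ⊆ (fiber hT v y).erase y := by
  intro u hu
  have hu' := (mem_fiber hT).mp hu
  rw [Finset.mem_erase]
  refine ⟨hu'.1, ?_⟩
  have hdisjzv : Disjoint (fiber hT y z) (fiber hT y v) := fiber_disjoint hT hyz hvy.symm hzv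
  have hunv : u ≠ v := by
    intro h
    subst h
    exact (Finset.disjoint_left.mp hdisjzv) hu (self_mem_fiber hT hvy.symm)
  rw [mem_fiber hT]
  refine ⟨hunv, ?_⟩
  rw [rel_flip hT hvy]
  intro hrel
  exact (Finset.disjoint_left.mp hdisjzv) hu ((mem_fiber hT).mpr ⟨hu'.1, hrel⟩)

lemma fiber_card_lt [Fintype V] (hT : T.IsTree) {v y z : V} (hvy : T.Adj v y)
    (hyz : T.Adj y z) (hzv : z ≠ v) : (fiber hT y z).card < (fiber hT v y).card := by
  classical
  have h1 := Finset.card_le_card (fiber_subset_lemma hT hvy hyz hzv)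
  have h2 := Finset.card_erase_of_mem (self_mem_fiber hT hvy)
  have h3 : 0 < (fiber hT v y).card := Finset.card_pos.mpr ⟨y, self_mem_fiber hT hvy⟩
  omega

/-- Existence of a centroid: a vertex all of whose branches have size at most `n/2`. -/
lemma exists_centroid [Fintype V] [Nonempty V] (hT : T.IsTree) :
    ∃ v : V, ∀ x, T.Adj v x → 2 * (fiber hT v x).card ≤ Fintype.card V := by
  classical
  set n := Fintype.card V with hn
  set g : V → ℕ := fun v => Finset.univ.sup (fun x => if T.Adj v x then (fiber hT v x).card else 0)
    with hg
  obtain ⟨v, -, hv⟩ := Finset.exists_min_image Finset.univ g Finset.univ_nonempty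
  refine ⟨v, ?_⟩
  by_contra hcon
  push_neg at hcon
  obtain ⟨x, hvx, hx⟩ := hcon
  have hgx : (fiber hT v x).card ≤ g v := by
    have h2 : (if T.Adj v x then (fiber hT v x).card else 0) ≤
        Finset.univ.sup (fun x => if T.Adj v x then (fiber hT v x).card else 0) :=
      Finset.le_sup (f := fun x => if T.Adj v x then (fiber hT v x).card else 0)
        (Finset.mem_univ x)
    rw [if_pos hvx] at h2
    exact h2
  have hgv : n < 2 * g v := by omega
  obtain ⟨y, -, hy⟩ := Finset.exists_mem_eq_sup Finset.univ Finset.univ_nonempty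
    (fun x => if T.Adj v x then (fiber hT v x).card else 0)
  have hgvpos : 0 < g v := by
    have : 0 < n := Fintype.card_pos
    omega
  have hy' : g v = if T.Adj v y then (fiber hT v y).card else 0 := hy
  have hvy : T.Adj v y := by
    by_contra h
    rw [if_neg h] at hy'
    omega
  have hyfib : (fiber hT v y).card = g v := by
    rw [if_pos hvy] at hy'
    omega
  have hgy : g y < g v := by
    show (Finset.univ.sup fun z => if T.Adj y z then (fiber hT y z).card else 0) < g v
    rw [Finset.sup_lt_iff (by exact hgvpos)]
    intro z _
    by_cases hadj : T.Adj y z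
    · rw [if_pos hadj]
      by_cases hzv : z = v
      · subst hzv
        have := fiber_card_add hT hvy
        omega
      · have := fiber_card_lt hT hvy hadj hzv
        omega
    · rw [if_neg hadj]
      exact hgvpos
  exact absurd (hv y (Finset.mem_univ y)) (by omega)

/-- Splitting a weighted finite set into two nearly equal halves. -/
lemma split_finset {α : Type*} [DecidableEq α] (k : α → ℕ) :
    ∀ (N : ℕ) (R : Finset α), R.card = N → ∀ c, (∀ y ∈ R, k y ≤ c) →
    ∃ A B : Finset α, Disjoint A B ∧ A ∪ B = R ∧ 2 * A.card ≤ R.card + 1 ∧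
      2 * B.card ≤ R.card ∧
      (∑ y ∈ B, k y) ≤ (∑ y ∈ A, k y) ∧ (∑ y ∈ A, k y) ≤ (∑ y ∈ B, k y) + c := by
  intro N
  induction N with
  | zero =>
    intro R hR c _
    have : R = ∅ := Finset.card_eq_zero.mp hR
    subst this
    exact ⟨∅, ∅, by simp⟩
  | succ N ih =>
    intro R hR c hc
    have hne : R.Nonempty := by rw [← Finset.card_pos, hR]; omega
    obtain ⟨x, hxR, hxmax⟩ := Finset.exists_max_image R k hne
    obtain ⟨A', B', hd, hu, hca, hcb, hs1, hs2⟩ := ih (R.erase x)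
      (by rw [Finset.card_erase_of_mem hxR, hR]; omega) (k x)
      (fun y hy => hxmax y (Finset.mem_of_mem_erase hy))
    have hcardE : (R.erase x).card = N := by rw [Finset.card_erase_of_mem hxR, hR]; omega
    have hxA : x ∉ A' := fun h =>
      (Finset.notMem_erase x R) (hu ▸ Finset.mem_union_left _ h)
    have hxB : x ∉ B' := fun h =>
      (Finset.notMem_erase x R) (hu ▸ Finset.mem_union_right _ h)
    refine ⟨insert x B', A', ?_, ?_, ?_, ?_, ?_, ?_⟩
    · rw [Finset.disjoint_insert_left]
      exact ⟨hxA, hd.symm⟩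
    · rw [Finset.insert_union, Finset.union_comm, hu, Finset.insert_erase hxR]
    · rw [Finset.card_insert_of_notMem hxB]
      omega
    · omega
    · rw [Finset.sum_insert hxB]
      omega
    · rw [Finset.sum_insert hxB]
      have := hc x hxR
      omega

/-- An injection from a small finset into a large one. -/
lemma exists_injOn {α β : Type*} [DecidableEq α] [DecidableEq β] [Nonempty β]
    (s : Finset α) (t : Finset β) (h : s.card ≤ t.card) :
    ∃ f : α → β, (∀ a ∈ s, ∀ b ∈ s, f a = f b → a = b) ∧ ∀ a ∈ s, f a ∈ t := by
  obtain ⟨t', ht'sub, ht'card⟩ := Finset.exists_subset_card_eq h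
  have hcardeq : Fintype.card s = Fintype.card t' := by
    rw [Fintype.card_coe, Fintype.card_coe, ht'card]
  let e := Fintype.equivOfCardEq hcardeq
  classical
  refine ⟨fun a => if ha : a ∈ s then (e ⟨a, ha⟩ : β) else Classical.arbitrary β, ?_, ?_⟩
  · intro a ha b hb hab
    simp only [dif_pos ha, dif_pos hb] at hab
    have := e.injective (Subtype.ext hab)
    exact congrArg Subtype.val this
  · intro a ha
    simp only [dif_pos ha]
    exact ht'sub (e ⟨a, ha⟩).2

end ClaimAux

/-- **Claim 3.5**: under the hypotheses of Claim 3.4 together with `Δ(T) < 11n/20`,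
every vertex outside `U₁ ∪ U₂` has fewer than `11n/40` `Ḡ`-neighbors in `U₁` or fewer
than `11n/40` `Ḡ`-neighbors in `U₂`. -/
theorem complement_neighbors_outside_bound
    {VT VG : Type*} [Fintype VT] [Fintype VG] [DecidableEq VG]
    (m n : ℕ) (hm : 9 ≤ m) (hn : m ^ 2 - m + 1 ≤ n)
    (T : SimpleGraph VT) [DecidableRel T.Adj] (hT : T.IsTree) (hTcard : Fintype.card VT = n)
    (hTdeg : 20 * T.maxDegree < 11 * n)
    (G : SimpleGraph VG) [DecidableRel G.Adj] (hnoT : ¬ Contains Gᶜ T)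
    (U1 U2 : Finset VG) (hdisj : Disjoint U1 U2)
    (hind1 : ∀ a ∈ U1, ∀ b ∈ U1, ¬ G.Adj a b)
    (hind2 : ∀ a ∈ U2, ∀ b ∈ U2, ¬ G.Adj a b)
    (hc1 : n - 2 * m + 2 ≤ U1.card) (hc2 : n - 2 * m + 2 ≤ U2.card) :
    ∀ w : VG, w ∉ U1 → w ∉ U2 →
      40 * (Gᶜ.neighborFinset w ∩ U1).card < 11 * n ∨
        40 * (Gᶜ.neighborFinset w ∩ U2).card < 11 * n := by
  classical
  open ClaimAux SimpleGraph in
  intro w hw1 hw2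
  by_contra hcon
  push_neg at hcon
  obtain ⟨hA, hB⟩ := hcon
  set NA := Gᶜ.neighborFinset w ∩ U1 with hNA
  set NB := Gᶜ.neighborFinset w ∩ U2 with hNB
  -- basic arithmetic facts
  have hm2 : 9 * m ≤ m * m := Nat.mul_le_mul_right m hm
  have hmsq : m ^ 2 = m * m := sq m
  have hn8 : 8 * m + 1 ≤ n := by omega
  have hn73 : 73 ≤ n := by omega
  -- VT is nonempty
  have hVTne : Nonempty VT := Fintype.card_pos_iff.mp (by omega)
  have hVGne : Nonempty VG := by
    have : U1.Nonempty := Finset.card_pos.mp (by omega)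
    exact ⟨this.choose⟩
  -- centroid
  obtain ⟨v, hcent⟩ := ClaimAux.exists_centroid hT
  rw [hTcard] at hcent
  set R := T.neighborFinset v with hR
  have hC : 20 * R.card < 11 * n := by
    have h1 : R.card = T.degree v := rfl
    have h2 : T.degree v ≤ T.maxDegree := T.degree_le_maxDegree v
    omega
  -- split the branches into two groups
  obtain ⟨A, B, hABdisj, hABunion, hAcard, hBcard, hsum1, hsum2⟩ :=
    ClaimAux.split_finset (fun x => (ClaimAux.fiber hT v x).card) R.card R rfl (n / 2)
      (fun y hy => by
        have := hcent y ((T.mem_neighborFinset v y).mp hy)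
        show (ClaimAux.fiber hT v y).card ≤ n / 2
        omega)
  have hAsubR : A ⊆ R := hABunion ▸ Finset.subset_union_left
  have hBsubR : B ⊆ R := hABunion ▸ Finset.subset_union_right
  set SA := A.biUnion (ClaimAux.fiber hT v) with hSA
  set SB := B.biUnion (ClaimAux.fiber hT v) with hSB
  have hadjof : ∀ x ∈ R, T.Adj v x := fun x hx => (T.mem_neighborFinset v x).mp hx
  have hSAcard : SA.card = ∑ y ∈ A, (ClaimAux.fiber hT v y).card := by
    apply Finset.card_biUnion
    intro x hx y hy hxy
    exact ClaimAux.fiber_disjoint hT (hadjof x (hAsubR hx)) (hadjof y (hAsubR hy)) hxy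
  have hSBcard : SB.card = ∑ y ∈ B, (ClaimAux.fiber hT v y).card := by
    apply Finset.card_biUnion
    intro x hx y hy hxy
    exact ClaimAux.fiber_disjoint hT (hadjof x (hBsubR hx)) (hadjof y (hBsubR hy)) hxy
  -- SA and SB are disjoint and cover univ.erase v
  have hSdisj : Disjoint SA SB := by
    rw [Finset.disjoint_left]
    intro u hu hu'
    obtain ⟨x, hxA, hux⟩ := Finset.mem_biUnion.mp hu
    obtain ⟨x', hx'B, hux'⟩ := Finset.mem_biUnion.mp hu'
    have hxx' : x = x' := ClaimAux.root_unique hT (hadjof x (hAsubR hxA))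
      (hadjof x' (hBsubR hx'B)) ((ClaimAux.mem_fiber hT).mp hux).2
      ((ClaimAux.mem_fiber hT).mp hux').2
    subst hxx'
    exact (Finset.disjoint_left.mp hABdisj) hxA hx'B
  have hcover : SA ∪ SB = Finset.univ.erase v := by
    ext u
    rw [Finset.mem_union, Finset.mem_erase]
    constructor
    · rintro (h | h) <;> obtain ⟨x, hx, hux⟩ := Finset.mem_biUnion.mp h <;>
        exact ⟨((ClaimAux.mem_fiber hT).mp hux).1, Finset.mem_univ u⟩
    · rintro ⟨hune, -⟩
      obtain ⟨x, hvx, hrel⟩ := ClaimAux.exists_root hT hune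
      have hxR : x ∈ R := (T.mem_neighborFinset v x).mpr hvx
      have hxAB : x ∈ A ∪ B := hABunion ▸ hxR
      have hufib : u ∈ ClaimAux.fiber hT v x := (ClaimAux.mem_fiber hT).mpr ⟨hune, hrel⟩
      rcases Finset.mem_union.mp hxAB with h | h
      · exact Or.inl (Finset.mem_biUnion.mpr ⟨x, h, hufib⟩)
      · exact Or.inr (Finset.mem_biUnion.mpr ⟨x, h, hufib⟩)
  have hstotal : SA.card + SB.card = n - 1 := by
    rw [← Finset.card_union_of_disjoint hSdisj, hcover,
      Finset.card_erase_of_mem (Finset.mem_univ v), Finset.card_univ, hTcard]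
  -- size bounds
  have hsizeA : SA.card ≤ n - 2 * m + 2 := by
    rw [hSAcard]
    rw [hSAcard, hSBcard] at hstotal
    omega
  have hsizeB : SB.card ≤ n - 2 * m + 2 := by
    rw [hSBcard]
    rw [hSAcard, hSBcard] at hstotal
    omega
  have hsizeAU : SA.card ≤ U1.card := le_trans hsizeA hc1
  have hsizeBU : SB.card ≤ U2.card := le_trans hsizeB hc2
  -- count bounds
  have hcountA : A.card ≤ NA.card := by omega
  have hcountB : B.card ≤ NB.card := by omega
  -- roots belong to their own branch
  have hAsubSA : A ⊆ SA := by
    intro x hx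
    exact Finset.mem_biUnion.mpr ⟨x, hx, ClaimAux.self_mem_fiber hT (hadjof x (hAsubR hx))⟩
  have hBsubSB : B ⊆ SB := by
    intro x hx
    exact Finset.mem_biUnion.mpr ⟨x, hx, ClaimAux.self_mem_fiber hT (hadjof x (hBsubR hx))⟩
  -- build the injections
  obtain ⟨fA, hfAinj, hfAmem⟩ := ClaimAux.exists_injOn A NA hcountA
  obtain ⟨fB, hfBinj, hfBmem⟩ := ClaimAux.exists_injOn B NB hcountB
  set IA := A.image fA with hIA
  set IB := B.image fB with hIB
  have hgAcard : (SA \ A).card ≤ (U1 \ IA).card := by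
    have h1 : (SA \ A).card = SA.card - A.card := Finset.card_sdiff_of_subset hAsubSA
    have h2 : U1.card - IA.card ≤ (U1 \ IA).card := Finset.le_card_sdiff _ _
    have h3 : IA.card ≤ A.card := Finset.card_image_le
    have h4 : A.card ≤ SA.card := Finset.card_le_card hAsubSA
    omega
  have hgBcard : (SB \ B).card ≤ (U2 \ IB).card := by
    have h1 : (SB \ B).card = SB.card - B.card := Finset.card_sdiff_of_subset hBsubSB
    have h2 : U2.card - IB.card ≤ (U2 \ IB).card := Finset.le_card_sdiff _ _
    have h3 : IB.card ≤ B.card := Finset.card_image_le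
    have h4 : B.card ≤ SB.card := Finset.card_le_card hBsubSB
    omega
  obtain ⟨gA, hgAinj, hgAmem⟩ := ClaimAux.exists_injOn (SA \ A) (U1 \ IA) hgAcard
  obtain ⟨gB, hgBinj, hgBmem⟩ := ClaimAux.exists_injOn (SB \ B) (U2 \ IB) hgBcard
  set φA : VT → VG := fun u => if u ∈ A then fA u else gA u with hφA
  set φB : VT → VG := fun u => if u ∈ B then fB u else gB u with hφB
  have hNAsub : NA ⊆ U1 := Finset.inter_subset_right
  have hNBsub : NB ⊆ U2 := Finset.inter_subset_right
  -- properties of φA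
  have hφA1 : ∀ u ∈ SA, φA u ∈ U1 := by
    intro u hu
    simp only [hφA]
    by_cases h : u ∈ A
    · rw [if_pos h]; exact hNAsub (hfAmem u h)
    · rw [if_neg h]
      exact (Finset.mem_sdiff.mp (hgAmem u (Finset.mem_sdiff.mpr ⟨hu, h⟩))).1
  have hφA2 : ∀ x ∈ A, φA x ∈ NA := by
    intro x hx
    simp only [hφA, if_pos hx]
    exact hfAmem x hx
  have hφA3 : ∀ a ∈ SA, ∀ b ∈ SA, φA a = φA b → a = b := by
    intro a ha b hb hab
    simp only [hφA] at hab
    by_cases haA : a ∈ A <;> by_cases hbA : b ∈ A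
    · rw [if_pos haA, if_pos hbA] at hab; exact hfAinj a haA b hbA hab
    · rw [if_pos haA, if_neg hbA] at hab
      have h1 : fA a ∈ IA := Finset.mem_image_of_mem fA haA
      have h2 : gA b ∈ U1 \ IA := hgAmem b (Finset.mem_sdiff.mpr ⟨hb, hbA⟩)
      rw [hab] at h1
      exact absurd h1 (Finset.mem_sdiff.mp h2).2
    · rw [if_neg haA, if_pos hbA] at hab
      have h1 : fA b ∈ IA := Finset.mem_image_of_mem fA hbA
      have h2 : gA a ∈ U1 \ IA := hgAmem a (Finset.mem_sdiff.mpr ⟨ha, haA⟩)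
      rw [← hab] at h1
      exact absurd h1 (Finset.mem_sdiff.mp h2).2
    · rw [if_neg haA, if_neg hbA] at hab
      exact hgAinj a (Finset.mem_sdiff.mpr ⟨ha, haA⟩) b (Finset.mem_sdiff.mpr ⟨hb, hbA⟩) hab
  -- properties of φB
  have hφB1 : ∀ u ∈ SB, φB u ∈ U2 := by
    intro u hu
    simp only [hφB]
    by_cases h : u ∈ B
    · rw [if_pos h]; exact hNBsub (hfBmem u h)
    · rw [if_neg h]
      exact (Finset.mem_sdiff.mp (hgBmem u (Finset.mem_sdiff.mpr ⟨hu, h⟩))).1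
  have hφB2 : ∀ x ∈ B, φB x ∈ NB := by
    intro x hx
    simp only [hφB, if_pos hx]
    exact hfBmem x hx
  have hφB3 : ∀ a ∈ SB, ∀ b ∈ SB, φB a = φB b → a = b := by
    intro a ha b hb hab
    simp only [hφB] at hab
    by_cases haB : a ∈ B <;> by_cases hbB : b ∈ B
    · rw [if_pos haB, if_pos hbB] at hab; exact hfBinj a haB b hbB hab
    · rw [if_pos haB, if_neg hbB] at hab
      have h1 : fB a ∈ IB := Finset.mem_image_of_mem fB haB
      have h2 : gB b ∈ U2 \ IB := hgBmem b (Finset.mem_sdiff.mpr ⟨hb, hbB⟩)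
      rw [hab] at h1
      exact absurd h1 (Finset.mem_sdiff.mp h2).2
    · rw [if_neg haB, if_pos hbB] at hab
      have h1 : fB b ∈ IB := Finset.mem_image_of_mem fB hbB
      have h2 : gB a ∈ U2 \ IB := hgBmem a (Finset.mem_sdiff.mpr ⟨ha, haB⟩)
      rw [← hab] at h1
      exact absurd h1 (Finset.mem_sdiff.mp h2).2
    · rw [if_neg haB, if_neg hbB] at hab
      exact hgBinj a (Finset.mem_sdiff.mpr ⟨ha, haB⟩) b (Finset.mem_sdiff.mpr ⟨hb, hbB⟩) hab
  -- the embedding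
  set f : VT → VG := fun u => if u = v then w else if u ∈ SA then φA u else φB u with hf
  have hcase : ∀ u : VT, u ≠ v → u ∉ SA → u ∈ SB := by
    intro u h1 h2
    have : u ∈ SA ∪ SB := by
      rw [hcover, Finset.mem_erase]
      exact ⟨h1, Finset.mem_univ u⟩
    rcases Finset.mem_union.mp this with h | h
    · exact absurd h h2
    · exact h
  have hfval : ∀ u : VT, (u = v ∧ f u = w) ∨ (u ∈ SA ∧ f u = φA u ∧ f u ∈ U1) ∨
      (u ∈ SB ∧ f u = φB u ∧ f u ∈ U2) := by
    intro u
    by_cases h1 : u = v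
    · left; exact ⟨h1, by rw [hf]; simp [h1]⟩
    · by_cases h2 : u ∈ SA
      · right; left
        have : f u = φA u := by rw [hf]; simp [h1, h2]
        exact ⟨h2, this, this ▸ hφA1 u h2⟩
      · right; right
        have hub := hcase u h1 h2
        have : f u = φB u := by rw [hf]; simp [h1, h2]
        exact ⟨hub, this, this ▸ hφB1 u hub⟩
  have hU12 : ∀ x, x ∈ U1 → x ∈ U2 → False := fun x h1 h2 =>
    (Finset.disjoint_left.mp hdisj) h1 h2
  -- injectivity
  have hinj : Function.Injective f := by
    intro a b hab
    rcases hfval a with ⟨ha1, ha2⟩ | ⟨ha1, ha2, ha3⟩ | ⟨ha1, ha2, ha3⟩ <;>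
      rcases hfval b with ⟨hb1, hb2⟩ | ⟨hb1, hb2, hb3⟩ | ⟨hb1, hb2, hb3⟩
    · rw [ha1, hb1]
    · exact absurd (ha2 ▸ hab ▸ hb3) hw1
    · exact absurd (ha2 ▸ hab ▸ hb3) hw2
    · exact absurd (hb2 ▸ hab ▸ ha3) hw1
    · exact hφA3 a ha1 b hb1 (by rw [← ha2, ← hb2, hab])
    · exact absurd (hab ▸ ha3) (fun h => hU12 _ h hb3)
    · exact absurd (hb2 ▸ hab ▸ ha3) hw2
    · exact (hU12 _ hb3 (hab ▸ ha3)).elim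
    · exact hφB3 a ha1 b hb1 (by rw [← ha2, ← hb2, hab])
  -- adjacency preservation
  have hfv : f v = w := by rw [hf]; simp
  have hvSA : v ∉ SA := by
    intro h
    have : v ∈ SA ∪ SB := Finset.mem_union_left _ h
    rw [hcover] at this
    exact (Finset.mem_erase.mp this).1 rfl
  have hvSB : v ∉ SB := by
    intro h
    have : v ∈ SA ∪ SB := Finset.mem_union_right _ h
    rw [hcover] at this
    exact (Finset.mem_erase.mp this).1 rfl
  have hadjroot : ∀ b : VT, T.Adj v b → Gᶜ.Adj w (f b) := by
    intro b hadj
    have hbR : b ∈ R := (T.mem_neighborFinset v b).mpr hadj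
    have hbv : b ≠ v := hadj.ne'
    have hbAB : b ∈ A ∪ B := hABunion ▸ hbR
    rcases Finset.mem_union.mp hbAB with h | h
    · have hbSA : b ∈ SA := hAsubSA h
      have : f b = φA b := by rw [hf]; simp [hbv, hbSA]
      rw [this]
      have := hφA2 b h
      rw [hNA] at this
      exact (Gᶜ.mem_neighborFinset w (φA b)).mp (Finset.mem_inter.mp this).1
    · have hbSB : b ∈ SB := hBsubSB h
      have hbSA : b ∉ SA := Finset.disjoint_right.mp hSdisj hbSB
      have : f b = φB b := by rw [hf]; simp [hbv, hbSA]
      rw [this]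
      have := hφB2 b h
      rw [hNB] at this
      exact (Gᶜ.mem_neighborFinset w (φB b)).mp (Finset.mem_inter.mp this).1
  have hadjpres : ∀ ⦃a b : VT⦄, T.Adj a b → Gᶜ.Adj (f a) (f b) := by
    intro a b hadj
    by_cases hav : a = v
    · subst hav
      rw [hfv]
      exact hadjroot b hadj
    · by_cases hbv : b = v
      · subst hbv
        rw [hfv]
        exact (hadjroot a hadj.symm).symm
      · -- both in the same fiber
        obtain ⟨x, hvx, hrel⟩ := ClaimAux.exists_root hT hav
        have hafib : a ∈ ClaimAux.fiber hT v x := (ClaimAux.mem_fiber hT).mpr ⟨hav, hrel⟩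
        have hbfib : b ∈ ClaimAux.fiber hT v x := ClaimAux.mem_fiber_of_adj hT hafib hadj hbv
        have hxR : x ∈ R := (T.mem_neighborFinset v x).mpr hvx
        have hfafb : f a ≠ f b := fun h => hadj.ne (hinj h)
        rcases Finset.mem_union.mp (hABunion ▸ hxR : x ∈ A ∪ B) with h | h
        · have haSA : a ∈ SA := Finset.mem_biUnion.mpr ⟨x, h, hafib⟩
          have hbSA : b ∈ SA := Finset.mem_biUnion.mpr ⟨x, h, hbfib⟩
          have hfa : f a = φA a := by rw [hf]; simp [hav, haSA]
          have hfb : f b = φA b := by rw [hf]; simp [hbv, hbSA]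
          rw [SimpleGraph.compl_adj]
          refine ⟨hfafb, ?_⟩
          rw [hfa, hfb]
          exact hind1 _ (hφA1 a haSA) _ (hφA1 b hbSA)
        · have haSB : a ∈ SB := Finset.mem_biUnion.mpr ⟨x, h, hafib⟩
          have hbSB : b ∈ SB := Finset.mem_biUnion.mpr ⟨x, h, hbfib⟩
          have haSA : a ∉ SA := Finset.disjoint_right.mp hSdisj haSB
          have hbSA : b ∉ SA := Finset.disjoint_right.mp hSdisj hbSB
          have hfa : f a = φB a := by rw [hf]; simp [hav, haSA]
          have hfb : f b = φB b := by rw [hf]; simp [hbv, hbSA]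
          rw [SimpleGraph.compl_adj]
          refine ⟨hfafb, ?_⟩
          rw [hfa, hfb]
          exact hind2 _ (hφB1 a haSB) _ (hφB1 b hbSB)
  exact hnoT ⟨f, hinj, hadjpres⟩
end
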